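/- arXiv:1003.2697 — 7 statements merged into one kernel-verified Lean document; each statement's English description precedes it below -/
import Mathlib

section
/- For every finite simple undirected graph G, the maximum size ν₂(G) of a 2-matching in G equals the minimum over all subsets U ⊆ VG of the quantity |VG| + |U| − iso(G − U), where iso(H) is the number of isolated nodes of H. -/
/-!
If `I` is the set of isolated nodes of `G - U`, an edge of a 2-matching `x` has no end in `I`,
or one end in `I` and the other in `U`. Summing the degree bound `2` over `Iᶜ` and over `U`
therefore gives `2 · size x ≤ 2 (|V| - |I|) + 2 |U|`.

Conversely, let `d` be the maximum of `|S| - |N(S)|`. Hall's theorem with `d` dummy targets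
gives a map `g`, injective on a set `D` of `|V| - d` nodes, sending each `v ∈ D` to a neighbour.
The arcs `v → g v` form a 2-matching of size `|D|`: a node is the tail of at most one arc and,
by injectivity, the head of at most one. Replacing `S` by `S \ N(S)` does not decrease
`|S| - |N(S)|` and makes `S` disjoint from `N(S)`, so that `S` consists of isolated nodes of
`G - N(S)`; this `U = N(S)` attains `|V| + |U| - iso(G - U) ≤ |V| - d`.
-/

open scoped Classical

namespace TF

noncomputable section

variable {V : Type*} {W : Type*}

/-- `x` is a 2-matching of `G`: values in `{0,1,2}`, supported on edges,
and the total value on edges incident to each node is at most 2. -/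
def IsTwoMatching [Fintype V] (G : SimpleGraph V) (x : Sym2 V → ℕ) : Prop :=
  (∀ e, x e ≠ 0 → e ∈ G.edgeSet) ∧ (∀ e, x e ≤ 2) ∧
  (∀ v : V, ∑ e ∈ Finset.univ.filter (fun e : Sym2 V => v ∈ e), x e ≤ 2)

/-- The size of a 2-matching. -/
def size [Fintype V] (x : Sym2 V → ℕ) : ℕ := ∑ e : Sym2 V, x e

/-- A set of edges contains a triangle. -/
def HasTriangle (s : Set (Sym2 V)) : Prop :=
  ∃ a b c : V, a ≠ b ∧ a ≠ c ∧ b ≠ c ∧ s(a, b) ∈ s ∧ s(a, c) ∈ s ∧ s(b, c) ∈ s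

/-- A 2-matching is triangle-free if its support contains no triangle. -/
def IsTriangleFree (x : Sym2 V → ℕ) : Prop := ¬ HasTriangle {e | x e ≠ 0}

/-- `ν₂(G)`: the maximum size of a 2-matching of `G`. -/
def nu2 [Fintype V] (G : SimpleGraph V) : ℕ :=
  sSup {k | ∃ x, IsTwoMatching G x ∧ size x = k}

/-- `ν₂³(G)`: the maximum size of a triangle-free 2-matching of `G`. -/
def nu23 [Fintype V] (G : SimpleGraph V) : ℕ :=
  sSup {k | ∃ x, IsTwoMatching G x ∧ IsTriangleFree x ∧ size x = k}

/-- The number of isolated nodes of a graph. -/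
def isolatedCount (H : SimpleGraph W) : ℕ :=
  Nat.card {v : W // ∀ w, ¬ H.Adj v w}

/-- `v` is a cut vertex (articulation point) of `H`. -/
def IsCutVertex (H : SimpleGraph W) (v : W) : Prop :=
  H.Connected ∧ ¬ (H.induce {w | w ≠ v}).Connected

/-- `H` is a triangle cluster, witnessed by the collection `T` of (vertex sets of) triangles:
`H` is connected, the edges of `H` partition into the triangles of `T`, any two triangles
of `T` share at most one node, and any such shared node is a cut vertex of `H`. -/
def IsTriangleClusterWith (H : SimpleGraph W) (T : Set (Finset W)) : Prop :=
  H.Connected ∧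
  (∀ t ∈ T, t.card = 3 ∧ ∀ u ∈ t, ∀ v ∈ t, u ≠ v → H.Adj u v) ∧
  (∀ u v : W, H.Adj u v → ∃! t, t ∈ T ∧ u ∈ t ∧ v ∈ t) ∧
  (∀ t₁ ∈ T, ∀ t₂ ∈ T, t₁ ≠ t₂ → (t₁ ∩ t₂).card ≤ 1) ∧
  (∀ t₁ ∈ T, ∀ t₂ ∈ T, t₁ ≠ t₂ → ∀ v ∈ t₁ ∩ t₂, IsCutVertex H v)

/-- `H` is a triangle cluster. -/
def IsTriangleCluster (H : SimpleGraph W) : Prop :=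
  ∃ T : Set (Finset W), IsTriangleClusterWith H T

/-- The number of connected components of `H` that are triangle clusters. -/
def clusterCount (H : SimpleGraph W) : ℕ :=
  Nat.card {c : H.ConnectedComponent // IsTriangleCluster (H.induce c.supp)}

/-- The number of connected components of `H` with an odd number of nodes. -/
def oddComponentCount (H : SimpleGraph W) : ℕ :=
  Nat.card {c : H.ConnectedComponent // Odd (Nat.card c.supp)}

/-- A graph is factor-critical if deleting any single node leaves a graph
with a perfect matching. -/
def IsFactorCritical (G : SimpleGraph V) : Prop :=
  ∀ v : V, ∃ M : (G.induce {w | w ≠ v}).Subgraph, M.IsPerfectMatching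

/-- `M` is a maximum(-size) matching of `G`. -/
def IsMaximumMatching (G : SimpleGraph V) (M : G.Subgraph) : Prop :=
  M.IsMatching ∧ ∀ M' : G.Subgraph, M'.IsMatching → M'.edgeSet.ncard ≤ M.edgeSet.ncard

/-- `ν(G)`: the maximum size of a matching of `G`. -/
def matchingNumber [Fintype V] (G : SimpleGraph V) : ℕ :=
  sSup {k | ∃ M : G.Subgraph, M.IsMatching ∧ M.edgeSet.ncard = k}

/-- A 2-matching is basic if the set of edges of value 1 partitions into a collection
of node-disjoint circuits of odd length. -/
def IsBasic (G : SimpleGraph V) (x : Sym2 V → ℕ) : Prop :=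
  ∃ C : Set (Σ v : V, G.Walk v v),
    (∀ c ∈ C, c.2.IsCycle ∧ Odd c.2.length) ∧
    (∀ c₁ ∈ C, ∀ c₂ ∈ C, c₁ ≠ c₂ →
      Disjoint {v | v ∈ c₁.2.support} {v | v ∈ c₂.2.support}) ∧
    {e | x e = 1} = ⋃ c ∈ C, {e | e ∈ c.2.edges}

/-- `F` is (the edge set of) a 2-regular spanning subgraph of `G`. -/
def IsTwoRegularSpanning (G : SimpleGraph V) (F : Set (Sym2 V)) : Prop :=
  F ⊆ G.edgeSet ∧ ∀ v : V, {e ∈ F | v ∈ e}.ncard = 2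

open Finset

theorem csSup_eq_csInf_of_forall_le {α : Type*} [ConditionallyCompleteLattice α]
    {A B : Set α} (hAB : ∀ a ∈ A, ∀ b ∈ B, a ≤ b) {a b : α} (ha : a ∈ A) (hb : b ∈ B)
    (hba : b ≤ a) : sSup A = sInf B :=
  le_antisymm (csSup_le ⟨a, ha⟩ fun a' ha' => le_csInf ⟨b, hb⟩ (hAB a' ha'))
    ((csInf_le ⟨a, fun b' hb' => hAB a ha b' hb'⟩ hb).trans
      (hba.trans (le_csSup ⟨b, fun a' ha' => hAB a' ha' b hb⟩ ha)))

theorem exists_injective_disjSum_of_card_le_biUnion_card_add {ι α : Type*} [DecidableEq α]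
    (t : ι → Finset α) (d : ℕ) (h : ∀ s : Finset ι, #s ≤ #(s.biUnion t) + d) :
    ∃ f : ι → α ⊕ Fin d,
      Function.Injective f ∧ ∀ i, f i ∈ (t i).disjSum (univ : Finset (Fin d)) := by
  rw [← all_card_le_biUnion_card_iff_exists_injective]
  intro s
  obtain rfl | ⟨i, hi⟩ := s.eq_empty_or_nonempty
  · simp
  have hunion : s.biUnion (fun i => (t i).disjSum (univ : Finset (Fin d))) =
      (s.biUnion t).disjSum univ := by
    ext (a | k)
    · simp
    · simpa using ⟨i, hi⟩
  rw [hunion, card_disjSum, card_univ, Fintype.card_fin]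
  exact h s

section Graph

variable [Fintype V] {G : SimpleGraph V}

theorem isolatedCount_induce_compl (U : Set V) :
    isolatedCount (G.induce Uᶜ) = #{v | v ∉ U ∧ ∀ w, G.Adj v w → w ∈ U} := by
  rw [isolatedCount, ← Fintype.card_subtype, ← Nat.card_eq_fintype_card]
  refine Nat.card_congr
    { toFun := fun v => ⟨v.1, v.1.2, fun w hvw => by_contra fun hw => v.2 ⟨w, hw⟩ hvw⟩
      invFun := fun v => ⟨⟨v.1, v.2.1⟩, fun w hvw => w.2 (v.2.2 w hvw)⟩
      left_inv := fun _ => rfl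
      right_inv := fun _ => rfl }

theorem sum_sum_incident_eq (x : Sym2 V → ℕ) (A : Finset V) :
    ∑ v ∈ A, ∑ e ∈ univ.filter (fun e : Sym2 V => v ∈ e), x e =
      ∑ e, x e * #{v ∈ A | v ∈ e} := by
  simp_rw [sum_filter]
  rw [sum_comm]
  refine sum_congr rfl fun e _ => ?_
  rw [← sum_filter, sum_const, smul_eq_mul, mul_comm]

theorem IsTwoMatching.sum_mul_card_le {x : Sym2 V → ℕ} (hx : IsTwoMatching G x)
    (A : Finset V) : ∑ e, x e * #{v ∈ A | v ∈ e} ≤ 2 * #A := by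
  rw [← sum_sum_incident_eq, mul_comm, ← smul_eq_mul, ← sum_const]
  exact sum_le_sum fun v _ => hx.2.2 v

theorem two_le_card_compl_add_card {I U : Finset V} (hIU : Disjoint I U)
    (hI : ∀ v ∈ I, ∀ w, G.Adj v w → w ∈ U) {e : Sym2 V} (he : e ∈ G.edgeSet) :
    2 ≤ #{v ∈ Iᶜ | v ∈ e} + #{v ∈ U | v ∈ e} := by
  have of_mem : ∀ a b, G.Adj a b → a ∈ I →
      2 ≤ #{v ∈ Iᶜ | v ∈ s(a, b)} + #{v ∈ U | v ∈ s(a, b)} := by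
    intro a b hab ha
    have hbU : b ∈ U := hI a ha b hab
    have hbI : b ∉ I := disjoint_right.1 hIU hbU
    have h₁ : 0 < #{v ∈ Iᶜ | v ∈ s(a, b)} := card_pos.2 ⟨b, by simp [hbI]⟩
    have h₂ : 0 < #{v ∈ U | v ∈ s(a, b)} := card_pos.2 ⟨b, by simp [hbU]⟩
    omega
  induction e using Sym2.ind with
  | _ a b =>
    rw [SimpleGraph.mem_edgeSet] at he
    by_cases ha : a ∈ I
    · exact of_mem a b he ha
    by_cases hb : b ∈ I
    · rw [Sym2.eq_swap]; exact of_mem b a he.symm hb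
    have hsub : {a, b} ⊆ ({v ∈ Iᶜ | v ∈ s(a, b)} : Finset V) := by
      intro v hv
      rw [mem_insert, mem_singleton] at hv
      rcases hv with rfl | rfl <;> simp [ha, hb]
    have := card_le_card hsub
    rw [card_pair he.ne] at this
    omega

theorem IsTwoMatching.size_add_card_le {x : Sym2 V → ℕ} (hx : IsTwoMatching G x)
    {I U : Finset V} (hIU : Disjoint I U) (hI : ∀ v ∈ I, ∀ w, G.Adj v w → w ∈ U) :
    size x + #I ≤ Fintype.card V + #U := by
  have hsize : 2 * size x ≤ 2 * #Iᶜ + 2 * #U :=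
    calc 2 * size x = ∑ e, x e * 2 := by rw [size, mul_sum]; simp_rw [mul_comm]
      _ ≤ ∑ e, x e * (#{v ∈ Iᶜ | v ∈ e} + #{v ∈ U | v ∈ e}) := by
        refine sum_le_sum fun e _ => ?_
        by_cases h : x e = 0
        · simp [h]
        · exact Nat.mul_le_mul_left _ (two_le_card_compl_add_card hIU hI (hx.1 e h))
      _ = ∑ e, x e * #{v ∈ Iᶜ | v ∈ e} + ∑ e, x e * #{v ∈ U | v ∈ e} := by
        simp only [mul_add, sum_add_distrib]
      _ ≤ 2 * #Iᶜ + 2 * #U := add_le_add (hx.sum_mul_card_le _) (hx.sum_mul_card_le _)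
  rw [card_compl] at hsize
  have := card_le_univ I
  omega

theorem IsTwoMatching.size_le {x : Sym2 V → ℕ} (hx : IsTwoMatching G x) (U : Set V) :
    size x ≤ Fintype.card V + U.ncard - isolatedCount (G.induce Uᶜ) := by
  rw [isolatedCount_induce_compl, Set.ncard_eq_toFinset_card']
  have := hx.size_add_card_le (I := {v | v ∉ U ∧ ∀ w, G.Adj v w → w ∈ U}) (U := U.toFinset)
    (disjoint_left.2 fun v hv => by simp_all) (fun v hv w hvw => by simp_all)
  omega

def arcCount (D : Finset V) (g : V → V) (e : Sym2 V) : ℕ := #{v ∈ D | s(v, g v) = e}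

theorem size_arcCount (D : Finset V) (g : V → V) : size (arcCount D g) = #D :=
  (card_eq_sum_card_fiberwise fun _ _ => mem_coe.2 (mem_univ _)).symm

theorem sum_incident_arcCount (D : Finset V) (g : V → V) (u : V) :
    ∑ e ∈ univ.filter (fun e : Sym2 V => u ∈ e), arcCount D g e =
      #{v ∈ D | u ∈ s(v, g v)} := by
  rw [card_eq_sum_card_fiberwise (f := fun v => s(v, g v)) (t := univ.filter (u ∈ ·))
    fun v hv => by simpa using (mem_filter.1 hv).2]
  refine sum_congr rfl fun e he => ?_
  rw [arcCount, filter_filter]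
  congr 1
  refine filter_congr fun v _ => ⟨fun h => ⟨h ▸ (mem_filter.1 he).2, h⟩, And.right⟩

theorem card_filter_mem_le_two (e : Sym2 V) : #{v | v ∈ e} ≤ 2 := by
  induction e using Sym2.ind with
  | _ a b =>
    refine (card_le_card fun v hv => ?_).trans (card_le_two (a := a) (b := b))
    simpa using hv

theorem isTwoMatching_arcCount {D : Finset V} {g : V → V} (hadj : ∀ v ∈ D, G.Adj v (g v))
    (hinj : Set.InjOn g D) : IsTwoMatching G (arcCount D g) := by
  refine ⟨fun e he => ?_, fun e => ?_, fun u => ?_⟩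
  · obtain ⟨v, hv⟩ := card_ne_zero.1 he
    rw [mem_filter] at hv
    exact hv.2 ▸ hadj v hv.1
  · refine (card_le_card fun v hv => ?_).trans (card_filter_mem_le_two e)
    rw [mem_filter] at hv ⊢
    exact ⟨mem_univ v, hv.2 ▸ Sym2.mem_mk_left v (g v)⟩
  · have hpre : #{v ∈ D | g v = u} ≤ 1 :=
      card_le_one.2 fun v hv w hw => hinj (mem_filter.1 hv).1 (mem_filter.1 hw).1
        ((mem_filter.1 hv).2.trans (mem_filter.1 hw).2.symm)
    rw [sum_incident_arcCount]
    calc #{v ∈ D | u ∈ s(v, g v)} ≤ #(insert u {v ∈ D | g v = u}) := by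
          refine card_le_card fun v hv => ?_
          rw [mem_filter, Sym2.mem_iff] at hv
          rcases hv with ⟨hvD, rfl | huv⟩
          · exact mem_insert_self _ _
          · exact mem_insert_of_mem (mem_filter.2 ⟨hvD, huv.symm⟩)
      _ ≤ 2 := (card_insert_le _ _).trans (by omega)

theorem exists_injOn_adj_of_card_le_add (d : ℕ)
    (h : ∀ s : Finset V, #s ≤ #(s.biUnion fun v => G.neighborFinset v) + d) :
    ∃ D : Finset V, ∃ g : V → V,
      Fintype.card V ≤ #D + d ∧ Set.InjOn g D ∧ ∀ v ∈ D, G.Adj v (g v) := by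
  obtain ⟨f, hf, hft⟩ := exists_injective_disjSum_of_card_le_biUnion_card_add _ d h
  have hleft : ∀ v, (f v).isLeft → f v = .inl ((f v).elim id fun _ => v) := by
    intro v hv
    obtain ⟨w, hw⟩ := Sum.isLeft_iff.1 hv
    simp [hw]
  refine ⟨univ.filter fun v => (f v).isLeft, fun v => (f v).elim id fun _ => v, ?_, ?_, ?_⟩
  · have hright : #{v | ¬(f v).isLeft} ≤ d := by
      refine (card_le_card_of_injOn f (t := univ.map .inr) (fun v hv => ?_) hf.injOn).trans
        (by simp)
      obtain ⟨k, hk⟩ := Sum.isRight_iff.1 (by simpa using hv)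
      simp [hk]
    have := card_filter_add_card_filter_not (s := univ) fun v => (f v).isLeft
    rw [card_univ] at this
    omega
  · intro u hu v hv huv
    apply hf
    rw [hleft u (mem_filter.1 hu).2, hleft v (mem_filter.1 hv).2]
    exact congrArg _ huv
  · intro v hv
    have := hleft v (mem_filter.1 hv).2 ▸ hft v
    simpa using this

theorem exists_card_sub_card_add_ncard_le_isolatedCount (S : Finset V) :
    ∃ U : Set V,
      #S - #(S.biUnion fun v => G.neighborFinset v) + U.ncard ≤ isolatedCount (G.induce Uᶜ) := by
  set N := S.biUnion fun v => G.neighborFinset v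
  set S₀ := S \ N
  set N₀ := S₀.biUnion fun v => G.neighborFinset v
  have hN₀S : Disjoint N₀ S := by
    refine disjoint_left.2 fun w hw hwS => ?_
    obtain ⟨v, hv, hvw⟩ := mem_biUnion.1 hw
    rw [SimpleGraph.mem_neighborFinset] at hvw
    exact (mem_sdiff.1 hv).2 (mem_biUnion.2 ⟨w, hwS, by simpa using hvw.symm⟩)
  have hN₀N : N₀ ⊆ N := biUnion_subset_biUnion_of_subset_left _ sdiff_subset
  have hcardN : #N₀ + #(S ∩ N) ≤ #N := by
    rw [← card_union_of_disjoint (disjoint_of_subset_right inter_subset_left hN₀S)]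
    exact card_le_card (union_subset hN₀N inter_subset_right)
  have hcardS : #S₀ + #(S ∩ N) = #S := card_sdiff_add_card_inter S N
  have hiso : #S₀ ≤ isolatedCount (G.induce (N₀ : Set V)ᶜ) := by
    rw [isolatedCount_induce_compl]
    refine card_le_card fun v hv => ?_
    simp only [mem_filter, mem_univ, true_and]
    refine ⟨?_, fun w hvw => ?_⟩
    · exact disjoint_right.1 hN₀S (mem_sdiff.1 hv).1
    · exact mem_biUnion.2 ⟨v, hv, by simpa using hvw⟩
  by_cases h : #N₀ ≤ #S₀
  · exact ⟨N₀, by rw [Set.ncard_coe_finset]; omega⟩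
  · exact ⟨∅, by rw [Set.ncard_empty]; omega⟩

end Graph

theorem exists_isTwoMatching_ncard_sub_le_size [Fintype V] (G : SimpleGraph V) :
    ∃ x U, IsTwoMatching G x ∧
      Fintype.card V + U.ncard - isolatedCount (G.induce Uᶜ) ≤ size x := by
  obtain ⟨S, -, hS⟩ := exists_max_image univ
    (fun s : Finset V => #s - #(s.biUnion fun v => G.neighborFinset v)) univ_nonempty
  obtain ⟨D, g, hD, hinj, hadj⟩ := exists_injOn_adj_of_card_le_add (G := G)
    (#S - #(S.biUnion fun v => G.neighborFinset v))
    fun s => by have := hS s (mem_univ s); omega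
  obtain ⟨U, hU⟩ := exists_card_sub_card_add_ncard_le_isolatedCount (G := G) S
  refine ⟨arcCount D g, U, isTwoMatching_arcCount hadj hinj, ?_⟩
  rw [size_arcCount]
  omega

theorem stmt0 [Fintype V] (G : SimpleGraph V) :
    nu2 G =
      sInf {m : ℕ | ∃ U : Set V,
        m = Fintype.card V + U.ncard - isolatedCount (G.induce Uᶜ)} := by
  obtain ⟨x, U, hx, hxU⟩ := exists_isTwoMatching_ncard_sub_le_size G
  refine csSup_eq_csInf_of_forall_le ?_ ⟨x, hx, rfl⟩ ⟨U, rfl⟩ hxU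
  rintro _ ⟨y, hy, rfl⟩ _ ⟨W, rfl⟩
  exact hy.size_le W

end

end TF
end

section
/- Let d ≥ 3 and let G be a d-regular finite simple undirected graph. Then for every subset U ⊆ VG, the number of connected components of G − U that are triangle clusters is at most |U|; that is, cluster(G − U) ≤ |U|. -/
open scoped Classical

namespace TF

noncomputable section

variable {V : Type*} {W : Type*}

/-!
Every component `C` of `G − U` that is a triangle cluster sends at least `d` edges into `U`,
while every node of `U` receives at most `d` edges; hence `d · cluster(G − U) ≤ d · |U|`.

Inside `C` each node lies in `deg_C w / 2` triangles, and a node that is not a cut vertex lies in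
at most one of them, so it sends at least `d − 2` edges to `U`. Every edge of `C` lies in a
triangle, so either `C` is a single node, sending `d` edges, or `C` has at least three nodes. In
the latter case, for `d = 3` all degrees in `C` are even, hence at most `2`, giving
`3 (d − 2) ≥ d` edges, and for `d ≥ 4` two non-cut vertices of `C` (leaves of a spanning tree)
already give `2 (d − 2) ≥ d`.
-/

theorem exists_ne_and_not_isCutVertex [Finite W] [Nontrivial W] {H : SimpleGraph W}
    (hH : H.Connected) : ∃ u v, u ≠ v ∧ ¬ IsCutVertex H u ∧ ¬ IsCutVertex H v := by
  have := Fintype.ofFinite W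
  obtain ⟨T, hTH, hT⟩ := hH.exists_isTree_le
  obtain ⟨u, v, huv, hu, hv⟩ := hT.exists_ne_and_degree_eq_one
  have leaf_not_isCutVertex : ∀ w, T.degree w = 1 → ¬ IsCutVertex H w := fun w hw hcut =>
    hcut.2 <| (hT.connected.induce_compl_singleton_of_degree_eq_one hw).mono fun _ _ h => hTH h
  exact ⟨u, v, huv, leaf_not_isCutVertex u hu, leaf_not_isCutVertex v hv⟩

def trianglesAt [Fintype W] (T : Set (Finset W)) (w : W) : Finset (Finset W) :=
  {t | t ∈ T ∧ w ∈ t}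

namespace IsTriangleClusterWith

variable [Fintype W] {H : SimpleGraph W} {T : Set (Finset W)}

theorem neighborFinset_eq_biUnion (hT : IsTriangleClusterWith H T) (w : W) :
    H.neighborFinset w = (trianglesAt T w).biUnion (·.erase w) := by
  obtain ⟨-, htri, huniq, -, -⟩ := hT
  ext u
  simp only [SimpleGraph.mem_neighborFinset, Finset.mem_biUnion, trianglesAt,
    Finset.mem_filter, Finset.mem_univ, true_and, Finset.mem_erase]
  constructor
  · intro hwu
    obtain ⟨t, ⟨htT, hwt, hut⟩, -⟩ := huniq w u hwu
    exact ⟨t, ⟨htT, hwt⟩, hwu.ne', hut⟩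
  · rintro ⟨t, ⟨htT, hwt⟩, huw, hut⟩
    exact (htri t htT).2 w hwt u hut (Ne.symm huw)

theorem degree_eq_two_mul_card_trianglesAt (hT : IsTriangleClusterWith H T) (w : W) :
    H.degree w = 2 * (trianglesAt T w).card := by
  obtain ⟨-, htri, -, hinter, -⟩ := id hT
  have mem : ∀ t ∈ trianglesAt T w, t ∈ T ∧ w ∈ t := by simp [trianglesAt]
  have hdisj : (trianglesAt T w : Set (Finset W)).PairwiseDisjoint (·.erase w) := by
    intro t₁ h₁ t₂ h₂ hne
    refine Finset.disjoint_left.mpr fun x hx₁ hx₂ => ?_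
    have : 1 < (t₁ ∩ t₂).card := Finset.one_lt_card.mpr
      ⟨x, by simp_all, w, by simp_all [mem t₁ h₁, mem t₂ h₂], (Finset.mem_erase.mp hx₁).1⟩
    exact (hinter t₁ (mem t₁ h₁).1 t₂ (mem t₂ h₂).1 hne).not_gt this
  rw [← SimpleGraph.card_neighborFinset_eq_degree, hT.neighborFinset_eq_biUnion,
    Finset.card_biUnion hdisj, Finset.sum_congr rfl fun t ht => by
      rw [Finset.card_erase_of_mem (mem t ht).2, (htri t (mem t ht).1).1], Finset.sum_const,
    smul_eq_mul, mul_comm]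

theorem degree_le_two_of_not_isCutVertex (hT : IsTriangleClusterWith H T) {w : W}
    (hw : ¬ IsCutVertex H w) : H.degree w ≤ 2 := by
  suffices (trianglesAt T w).card ≤ 1 by rw [hT.degree_eq_two_mul_card_trianglesAt]; omega
  refine Finset.card_le_one.mpr fun t₁ h₁ t₂ h₂ => by_contra fun hne => hw ?_
  simp only [trianglesAt, Finset.mem_filter, Finset.mem_univ, true_and] at h₁ h₂
  exact hT.2.2.2.2 t₁ h₁.1 t₂ h₂.1 hne w (Finset.mem_inter.mpr ⟨h₁.2, h₂.2⟩)

theorem not_adj_of_card_le_two (hT : IsTriangleClusterWith H T) (hW : Fintype.card W ≤ 2)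
    (u v : W) : ¬ H.Adj u v := fun huv => by
  obtain ⟨t, ⟨htT, -⟩, -⟩ := hT.2.2.1 u v huv
  have := (hT.2.1 t htT).1 ▸ t.card_le_univ
  omega

theorem le_sum_of_add_degree_eq (hT : IsTriangleClusterWith H T) {d : ℕ} (hd : 3 ≤ d)
    (f : W → ℕ) (hf : ∀ w, f w + H.degree w = d) : d ≤ ∑ w, f w := by
  by_cases hW : Fintype.card W ≤ 2
  · obtain ⟨w⟩ := hT.1.nonempty
    have hdeg : H.degree w = 0 := Nat.eq_zero_of_not_pos fun hpos =>
      have ⟨u, hwu⟩ := (H.degree_pos_iff_exists_adj w).mp hpos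
      hT.not_adj_of_card_le_two hW w u hwu
    calc d = f w := by have := hf w; omega
      _ ≤ ∑ w, f w := Finset.single_le_sum (fun _ _ => Nat.zero_le _) (Finset.mem_univ w)
  by_cases hd3 : d = 3
  · have one_le_f : ∀ w, 1 ≤ f w := fun w => by
      have := hf w; have := hT.degree_eq_two_mul_card_trianglesAt w; omega
    calc d ≤ ∑ _ : W, 1 := by simp; omega
      _ ≤ ∑ w, f w := Finset.sum_le_sum fun w _ => one_le_f w
  have : Nontrivial W := Fintype.one_lt_card_iff_nontrivial.mp (by omega)
  obtain ⟨u, v, huv, hu, hv⟩ := exists_ne_and_not_isCutVertex hT.1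
  have := hT.degree_le_two_of_not_isCutVertex hu
  have := hT.degree_le_two_of_not_isCutVertex hv
  calc d ≤ f u + f v := by have := hf u; have := hf v; omega
    _ = ∑ w ∈ {u, v}, f w := (Finset.sum_pair huv).symm
    _ ≤ ∑ w, f w := Finset.sum_le_sum_of_subset (Finset.subset_univ _)

end IsTriangleClusterWith

theorem _root_.SimpleGraph.ConnectedComponent.degree_induce_supp [Fintype W]
    {H : SimpleGraph W} (c : H.ConnectedComponent) (w : c.supp) :
    (H.induce c.supp).degree w = H.degree w :=
  H.degree_induce_of_neighborSet_subset fun _ hx => c.mem_supp_of_adj_mem_supp w.2 hx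

theorem _root_.SimpleGraph.ConnectedComponent.sum_sum_supp [Fintype W] {H : SimpleGraph W}
    (f : W → ℕ) : ∑ c : H.ConnectedComponent, ∑ w : c.supp, f w = ∑ w, f w := by
  convert Fintype.sum_fiberwise H.connectedComponentMk f <;>
    exact SimpleGraph.ConnectedComponent.mem_supp_iff ..

section

variable [Fintype V] {G : SimpleGraph V}

theorem _root_.SimpleGraph.card_neighborFinset_inter_add_degree_induce_compl (U : Set V)
    (v : ↥Uᶜ) :
    (G.neighborFinset v ∩ U.toFinset).card + (G.induce Uᶜ).degree v = G.degree v := by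
  rw [← SimpleGraph.card_neighborFinset_eq_degree, ← Finset.card_map (.subtype (· ∈ Uᶜ)),
    SimpleGraph.map_neighborFinset_induce, Set.toFinset_compl, ← Finset.card_union_of_disjoint,
    ← Finset.inter_union_distrib_left, Finset.union_compl, Finset.inter_univ,
    SimpleGraph.card_neighborFinset_eq_degree]
  exact disjoint_compl_right.mono Finset.inter_subset_right Finset.inter_subset_right

theorem _root_.SimpleGraph.sum_card_neighborFinset_inter (s : Finset V) :
    ∑ v, (G.neighborFinset v ∩ s).card = ∑ u ∈ s, G.degree u := by
  have above : ∀ v, G.neighborFinset v ∩ s = s.bipartiteAbove G.Adj v := fun v => by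
    ext; simp [Finset.bipartiteAbove, and_comm]
  have below : ∀ u, G.neighborFinset u = Finset.univ.bipartiteBelow G.Adj u := fun u => by
    ext; simp [Finset.bipartiteBelow, G.adj_comm]
  simp_rw [above, ← SimpleGraph.card_neighborFinset_eq_degree, below]
  exact Finset.sum_card_bipartiteAbove_eq_sum_card_bipartiteBelow G.Adj

end

theorem clusterCount_mul_le_sum [Fintype W] {H : SimpleGraph W} {d : ℕ} (f : W → ℕ)
    (hf : ∀ c : H.ConnectedComponent, IsTriangleCluster (H.induce c.supp) →
      d ≤ ∑ w : c.supp, f w) :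
    clusterCount H * d ≤ ∑ w, f w := calc
  clusterCount H * d =
      ∑ c : H.ConnectedComponent with IsTriangleCluster (H.induce c.supp), d := by
    simp [clusterCount, Nat.card_eq_fintype_card, Fintype.card_subtype]
  _ ≤ ∑ c : H.ConnectedComponent with IsTriangleCluster (H.induce c.supp), ∑ w : c.supp, f w :=
    Finset.sum_le_sum fun c hc => hf c (Finset.mem_filter.mp hc).2
  _ ≤ ∑ c : H.ConnectedComponent, ∑ w : c.supp, f w :=
    Finset.sum_le_sum_of_subset (Finset.filter_subset _ _)
  _ = ∑ w, f w := SimpleGraph.ConnectedComponent.sum_sum_supp f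

theorem le_sum_card_neighborFinset_inter_of_isTriangleCluster [Fintype V] {G : SimpleGraph V}
    {d : ℕ} (hd : 3 ≤ d) (hreg : G.IsRegularOfDegree d) (U : Set V)
    (c : (G.induce Uᶜ).ConnectedComponent) (hc : IsTriangleCluster ((G.induce Uᶜ).induce c.supp)) :
    d ≤ ∑ w : c.supp, (G.neighborFinset w ∩ U.toFinset).card := by
  obtain ⟨T, hT⟩ := hc
  refine hT.le_sum_of_add_degree_eq hd _ fun w => ?_
  -- `convert` only reconciles classical with derived decidability instances.
  convert G.card_neighborFinset_inter_add_degree_induce_compl U w.1 using 2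
  · convert c.degree_induce_supp w
  · exact (hreg _).symm

theorem stmt10 [Fintype V] (G : SimpleGraph V) (d : ℕ) (hd : 3 ≤ d)
    (hreg : G.IsRegularOfDegree d) (U : Set V) :
    clusterCount (G.induce Uᶜ) ≤ U.ncard := by
  let edgesToU : V → ℕ := fun v => (G.neighborFinset v ∩ U.toFinset).card
  have : clusterCount (G.induce Uᶜ) * d ≤ U.ncard * d := calc
    _ ≤ ∑ w : ↥Uᶜ, edgesToU w := clusterCount_mul_le_sum _ fun c hc => by
      convert le_sum_card_neighborFinset_inter_of_isTriangleCluster hd hreg U c hc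
    _ ≤ ∑ v, edgesToU v := by
      rw [← Finset.sum_subtype Uᶜ.toFinset (fun _ => Set.mem_toFinset) edgesToU]
      exact Finset.sum_le_univ_sum_of_nonneg fun _ => Nat.zero_le _
    _ = ∑ u ∈ U.toFinset, G.degree u := SimpleGraph.sum_card_neighborFinset_inter _
    _ = U.ncard * d := by simp [hreg _, Set.ncard_eq_toFinset_card']
  exact Nat.le_of_mul_le_mul_right this (by omega)

end

end TF
end

section
/- Every d-regular finite simple undirected graph with d ≥ 1 has a perfect 2-matching. -/
/-!
In a `d`-regular graph with `d ≥ 1`, double counting the edges between a node set `S` and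
its neighbourhood `N(S)` gives `d |S| ≤ d |N(S)|`, so Hall's condition holds and there is an
injective, hence bijective, map `f` with `v ~ f v` for every node `v`. Giving each edge `e`
the number of nodes `u` with `e = {u, f u}` yields a 2-matching of size `|V|`: a node `v` lies
only on the pairs `{v, f v}` and `{f⁻¹ v, v}`.
-/

open scoped Classical

namespace TF

noncomputable section

variable {V : Type*} {W : Type*}

section

open Finset

namespace SimpleGraph

variable [Fintype V] {G : SimpleGraph V} {d : ℕ}

theorem IsRegularOfDegree.card_le_card_biUnion_neighborFinset (hreg : G.IsRegularOfDegree d)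
    (hd : 0 < d) (S : Finset V) : #S ≤ #(S.biUnion fun v => G.neighborFinset v) := by
  set T := S.biUnion fun v => G.neighborFinset v
  have hout : ∀ v ∈ S, d ≤ #(T.bipartiteAbove G.Adj v) := fun v hv => by
    refine (hreg v).symm.le.trans (card_le_card fun w hw => ?_)
    exact mem_filter.mpr ⟨mem_biUnion.mpr ⟨v, hv, hw⟩, (G.mem_neighborFinset v w).mp hw⟩
  have hin : ∀ w ∈ T, #(S.bipartiteBelow G.Adj w) ≤ d := fun w _ => by
    refine le_of_le_of_eq (card_le_card fun v hv => ?_) (hreg w)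
    exact (G.mem_neighborFinset w v).mpr (mem_filter.mp hv).2.symm
  exact Nat.le_of_mul_le_mul_right (card_mul_le_card_mul G.Adj hout hin) hd

theorem IsRegularOfDegree.exists_injective_adj (hreg : G.IsRegularOfDegree d) (hd : 0 < d) :
    ∃ f : V → V, Function.Injective f ∧ ∀ v, G.Adj v (f v) := by
  obtain ⟨f, hf, hadj⟩ := (all_card_le_biUnion_card_iff_exists_injective
    fun v => G.neighborFinset v).mp (IsRegularOfDegree.card_le_card_biUnion_neighborFinset hreg hd)
  exact ⟨f, hf, fun v => (G.mem_neighborFinset v (f v)).mp (hadj v)⟩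

end SimpleGraph

variable [Fintype V]

def twoMatchingOfMap (f : V → V) (e : Sym2 V) : ℕ := #{u | s(u, f u) = e}

variable {f : V → V}

theorem exists_eq_of_twoMatchingOfMap_ne_zero {e : Sym2 V} (he : twoMatchingOfMap f e ≠ 0) :
    ∃ u, s(u, f u) = e := by
  obtain ⟨u, hu⟩ := card_pos.mp (Nat.pos_of_ne_zero he)
  exact ⟨u, (mem_filter.mp hu).2⟩

theorem twoMatchingOfMap_le_two (e : Sym2 V) : twoMatchingOfMap f e ≤ 2 := by
  induction e using Sym2.inductionOn with
  | hf a b =>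
    unfold twoMatchingOfMap
    have hsub : ({u | s(u, f u) = s(a, b)} : Finset V) ⊆ {a, b} := fun u hu => by
      rcases Sym2.eq_iff.mp (mem_filter.mp hu).2 with ⟨rfl, -⟩ | ⟨rfl, -⟩ <;> simp
    exact (card_le_card hsub).trans card_le_two

theorem sum_twoMatchingOfMap_incident (v : V) :
    ∑ e ∈ univ.filter (fun e : Sym2 V => v ∈ e), twoMatchingOfMap f e =
      #{u | v ∈ s(u, f u)} :=
  sum_card_fiberwise_eq_card_filter _ _ _ |>.trans (by simp)

theorem card_filter_mem_sym2_le_two (hf : Function.Injective f) (v : V) :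
    #{u | v ∈ s(u, f u)} ≤ 2 := by
  obtain ⟨w, rfl⟩ := (Finite.injective_iff_surjective.mp hf) v
  have hsub : ({u | f w ∈ s(u, f u)} : Finset V) ⊆ {f w, w} := fun u hu => by
    rcases Sym2.mem_iff.mp (mem_filter.mp hu).2 with rfl | h
    · simp
    · simp [hf h]
  exact (card_le_card hsub).trans card_le_two

theorem size_twoMatchingOfMap : size (twoMatchingOfMap f) = Fintype.card V :=
  (card_eq_sum_card_fiberwise (s := univ) fun _ _ => mem_univ _).symm

theorem isTwoMatching_twoMatchingOfMap {G : SimpleGraph V} (hf : Function.Injective f)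
    (hadj : ∀ v, G.Adj v (f v)) :
    IsTwoMatching G (twoMatchingOfMap f) := by
  refine ⟨fun e he => ?_, twoMatchingOfMap_le_two, fun v => ?_⟩
  · obtain ⟨u, rfl⟩ := exists_eq_of_twoMatchingOfMap_ne_zero he
    exact hadj u
  · rw [sum_twoMatchingOfMap_incident]
    exact card_filter_mem_sym2_le_two hf v

end

theorem stmt11 [Fintype V] (G : SimpleGraph V) (d : ℕ) (hd : 1 ≤ d)
    (hreg : G.IsRegularOfDegree d) :
    ∃ x, IsTwoMatching G x ∧ size x = Fintype.card V := by
  obtain ⟨f, hf, hadj⟩ := SimpleGraph.IsRegularOfDegree.exists_injective_adj hreg hd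
  exact ⟨twoMatchingOfMap f, isTwoMatching_twoMatchingOfMap hf hadj, size_twoMatchingOfMap⟩

end

end TF
end

section
/- For every 2-matching x in a finite simple undirected graph G there exists a basic 2-matching x' in G with size at least the size of x; here a 2-matching is basic if the set of edges e with x'(e) = 1 partitions into node-disjoint circuits of odd length. -/
/-!
Induct on the number of edges of value 1; they form a graph of maximum degree 2. At a node of
degree 1 of this graph, or along an even cycle of it, the value-1 edges can be traded for edges
of value 2 and 0 without losing size. An odd cycle is removed, the rest is made basic by
induction without covering new nodes, and the cycle is then put back as a circuit of value-1
edges.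
-/

open scoped Classical

namespace TF

noncomputable section

variable {V : Type*} {W : Type*}

section IncSum

variable [Fintype V] {G : SimpleGraph V} {y w : Sym2 V → ℕ} {v : V} {e f : Sym2 V}

def incSum (y : Sym2 V → ℕ) (v : V) : ℕ :=
  ∑ e ∈ Finset.univ.filter (fun e : Sym2 V => v ∈ e), y e

def ones (y : Sym2 V → ℕ) : Finset (Sym2 V) := Finset.univ.filter (fun e => y e = 1)

@[simp] theorem mem_ones : e ∈ ones y ↔ y e = 1 := by simp [ones]

theorem sum_le_incSum {s : Finset (Sym2 V)} (hs : ∀ e ∈ s, v ∈ e) :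
    ∑ e ∈ s, y e ≤ incSum y v :=
  Finset.sum_le_sum_of_subset (fun e he => by simpa using hs e he)

theorem le_incSum (hv : v ∈ e) : y e ≤ incSum y v := by
  simpa using sum_le_incSum (y := y) (s := {e}) (by simpa using hv)

theorem exists_mem_of_incSum_ne_zero (h : incSum y v ≠ 0) : ∃ e, v ∈ e ∧ y e ≠ 0 := by
  obtain ⟨e, he, hne⟩ := Finset.exists_ne_zero_of_sum_ne_zero h
  exact ⟨e, by simpa using he, hne⟩

theorem incSum_add : incSum (y + w) v = incSum y v + incSum w v :=
  Finset.sum_add_distrib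

theorem size_add : size (y + w) = size y + size w :=
  Finset.sum_add_distrib

theorem incSum_single (k : ℕ) (x : V) :
    incSum (Pi.single e k) x = if x ∈ e then k else 0 := by
  simp [incSum, Finset.sum_pi_single']

theorem size_single (k : ℕ) : size (Pi.single e k : Sym2 V → ℕ) = k := by
  simp [size]

theorem IsTwoMatching.incSum_le (hy : IsTwoMatching G y) (v : V) : incSum y v ≤ 2 :=
  hy.2.2 v

theorem isTwoMatching_of_incSum_le (hG : ∀ e, y e ≠ 0 → e ∈ G.edgeSet)
    (hy : ∀ v, incSum y v ≤ 2) : IsTwoMatching G y := by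
  refine ⟨hG, fun e => ?_, hy⟩
  induction e using Sym2.ind with
  | _ a b => exact (le_incSum (Sym2.mem_mk_left a b)).trans (hy a)

theorem IsTwoMatching.of_le {y₀ : Sym2 V → ℕ} (hy : IsTwoMatching G y)
    (h : ∀ e, y₀ e ≤ y e) :
    IsTwoMatching G y₀ :=
  isTwoMatching_of_incSum_le (fun e he => hy.1 e (by have := h e; omega))
    (fun v => (Finset.sum_le_sum fun e _ => h e).trans (hy.incSum_le v))

theorem IsTwoMatching.add_le_two (hy : IsTwoMatching G y) (hef : e ≠ f) (he : v ∈ e)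
    (hf : v ∈ f) : y e + y f ≤ 2 := by
  have := sum_le_incSum (y := y) (v := v) (s := {e, f}) (by simp [he, hf])
  rw [Finset.sum_pair hef] at this
  exact this.trans (hy.incSum_le v)

theorem IsTwoMatching.add_add_le_two {g : Sym2 V} (hy : IsTwoMatching G y) (hef : e ≠ f)
    (heg : e ≠ g) (hfg : f ≠ g) (he : v ∈ e) (hf : v ∈ f) (hg : v ∈ g) :
    y e + y f + y g ≤ 2 := by
  have := sum_le_incSum (y := y) (v := v) (s := {e, f, g}) (by simp [he, hf, hg])
  rw [Finset.sum_insert (by simp [hef, heg]), Finset.sum_pair hfg] at this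
  have := hy.incSum_le v
  omega

theorem IsTwoMatching.eq_one_of_eq_one (hy : IsTwoMatching G y) (he : y e = 1) (hve : v ∈ e)
    (hvf : v ∈ f) (hf : y f ≠ 0) : y f = 1 := by
  rcases eq_or_ne e f with rfl | hef
  · exact he
  · have := hy.add_le_two hef hve hvf
    omega

theorem IsTwoMatching.card_le_two {s : Finset (Sym2 V)} (hy : IsTwoMatching G y)
    (hs : ∀ e ∈ s, v ∈ e) (h1 : ∀ e ∈ s, y e = 1) : s.card ≤ 2 := by
  have := s.card_nsmul_le_sum y 1 (fun e he => (h1 e he).ge)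
  simp only [smul_eq_mul, mul_one] at this
  exact this.trans ((sum_le_incSum hs).trans (hy.incSum_le v))

end IncSum

section OneGraph

variable [Fintype V] {G : SimpleGraph V} {y : Sym2 V → ℕ} {a b : V} {e f : Sym2 V}

def oneGraph (y : Sym2 V → ℕ) : SimpleGraph V := SimpleGraph.fromEdgeSet {e | y e = 1}

theorem IsTwoMatching.oneGraph_adj_iff (hy : IsTwoMatching G y) :
    (oneGraph y).Adj a b ↔ y s(a, b) = 1 :=
  ⟨fun h => h.1, fun h => ⟨h, G.ne_of_adj (hy.1 s(a, b) (by omega))⟩⟩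

theorem IsTwoMatching.oneGraph_le (hy : IsTwoMatching G y) : oneGraph y ≤ G :=
  fun a b h => hy.1 s(a, b) (by rw [hy.oneGraph_adj_iff] at h; omega)

theorem IsTwoMatching.ncard_neighborSet_oneGraph_le (hy : IsTwoMatching G y) (v : V) :
    ((oneGraph y).neighborSet v).ncard ≤ 2 := by
  by_contra! h
  obtain ⟨a, b, c, ha, hb, hc, hab, hac, hbc⟩ := (Set.two_lt_ncard_iff (Set.toFinite _)).mp h
  simp only [SimpleGraph.mem_neighborSet, hy.oneGraph_adj_iff] at ha hb hc
  have := hy.add_add_le_two (Sym2.congr_right.not.2 hab) (Sym2.congr_right.not.2 hac)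
    (Sym2.congr_right.not.2 hbc) (Sym2.mem_mk_left v a) (Sym2.mem_mk_left v b)
    (Sym2.mem_mk_left v c)
  omega

theorem IsTwoMatching.exists_neighborSet_oneGraph_eq_singleton (hy : IsTwoMatching G y)
    (h : ¬ (oneGraph y).IsCycles) : ∃ v u, (oneGraph y).neighborSet v = {u} := by
  simp only [SimpleGraph.IsCycles, not_forall] at h
  obtain ⟨v, hne, h2⟩ := h
  have := (Set.ncard_pos (Set.toFinite _)).mpr hne
  have := hy.ncard_neighborSet_oneGraph_le v
  obtain ⟨u, hu⟩ := Set.ncard_eq_one.mp (by omega : ((oneGraph y).neighborSet v).ncard = 1)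
  exact ⟨v, u, hu⟩

theorem IsTwoMatching.exists_isCycle (hy : IsTwoMatching G y) (h : (oneGraph y).IsCycles)
    (hne : (ones y).Nonempty) :
    ∃ (z : V) (c : G.Walk z z), c.IsCycle ∧ ∀ e ∈ c.edges, y e = 1 := by
  obtain ⟨e, he⟩ := hne
  induction e using Sym2.ind with
  | _ a b =>
    have hadj : (oneGraph y).Adj a b := hy.oneGraph_adj_iff.2 (mem_ones.1 he)
    obtain ⟨z, c, hc, -⟩ := SimpleGraph.adj_and_reachable_delete_edges_iff_exists_cycle.mp
      ⟨hadj, h.reachable_deleteEdges hadj⟩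
    refine ⟨z, c.mapLe hy.oneGraph_le, (SimpleGraph.Walk.isCycle_mapLe _).2 hc, fun e he => ?_⟩
    rw [SimpleGraph.Walk.edges_mapLe_eq_edges] at he
    have := c.edges_subset_edgeSet he
    rw [oneGraph, SimpleGraph.edgeSet_fromEdgeSet] at this
    exact this.1

theorem IsTwoMatching.mem_edges_of_mem_support {z x : V} {c : G.Walk z z}
    (hy : IsTwoMatching G y) (hc : c.IsCycle) (hce : ∀ e ∈ c.edges, y e = 1)
    (hx : x ∈ c.support) (hxf : x ∈ f) (hf : y f ≠ 0) : f ∈ c.edges := by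
  obtain ⟨a, b, hab, hnb⟩ := Set.ncard_eq_two.mp (hc.ncard_neighborSet_toSubgraph_eq_two hx)
  have hedge : ∀ t ∈ ({a, b} : Set V), s(x, t) ∈ c.edges := fun t ht =>
    SimpleGraph.Walk.adj_toSubgraph_iff_mem_edges.mp (by rwa [← hnb] at ht)
  have ha := hedge a (by simp)
  have hb := hedge b (by simp)
  by_contra hfc
  have := hy.add_add_le_two (Sym2.congr_right.not.2 hab) (ne_of_mem_of_not_mem ha hfc)
    (ne_of_mem_of_not_mem hb hfc) (Sym2.mem_mk_left x a) (Sym2.mem_mk_left x b) hxf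
  rw [hce _ ha, hce _ hb] at this
  omega

end OneGraph

section Exchange

def eraseOn (S : Finset (Sym2 V)) (y : Sym2 V → ℕ) : Sym2 V → ℕ :=
  fun e => if e ∈ S then 0 else y e

theorem eraseOn_ne_zero {S : Finset (Sym2 V)} {y : Sym2 V → ℕ} {e : Sym2 V} :
    eraseOn S y e ≠ 0 ↔ y e ≠ 0 ∧ e ∉ S := by
  by_cases he : e ∈ S <;> simp [eraseOn, he]

variable [Fintype V] {G : SimpleGraph V} {y y' w : Sym2 V → ℕ} {S : Finset (Sym2 V)}
  {e : Sym2 V}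

/-- `w` may replace `y` on the value-1 edges `S`: it is supported on `S`, is at least as large
there, and every node it covers meets no edge of `y` outside `S`. -/
structure IsExchange (y : Sym2 V → ℕ) (S : Finset (Sym2 V)) (w : Sym2 V → ℕ) : Prop where
  eq_one : ∀ e ∈ S, y e = 1
  nonempty : S.Nonempty
  mem_of_ne_zero : ∀ e, w e ≠ 0 → e ∈ S
  incSum_le : ∀ v, incSum w v ≤ 2
  mem_of_incSum_ne_zero : ∀ v, incSum w v ≠ 0 → ∀ f, v ∈ f → y f ≠ 0 → f ∈ S
  card_le_size : S.card ≤ size w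

theorem IsTwoMatching.eraseOn (hy : IsTwoMatching G y) (S : Finset (Sym2 V)) :
    IsTwoMatching G (eraseOn S y) :=
  hy.of_le fun e => by unfold TF.eraseOn; split_ifs <;> omega

namespace IsExchange

theorem size_eraseOn_add_card (hx : IsExchange y S w) : size (eraseOn S y) + S.card = size y := by
  have hsplit : y = eraseOn S y + fun e => if e ∈ S then 1 else 0 := by
    funext e
    by_cases he : e ∈ S <;> simp [eraseOn, he, hx.eq_one]
  conv_rhs => rw [hsplit]
  rw [size_add]
  simp [size]

theorem card_ones_eraseOn_lt (hx : IsExchange y S w) :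
    (ones (eraseOn S y)).card < (ones y).card := by
  refine Finset.card_lt_card ((Finset.ssubset_iff_of_subset fun e he => ?_).2 ?_)
  · have := eraseOn_ne_zero.1 (by rw [mem_ones.1 he]; omega : eraseOn S y e ≠ 0)
    simpa [eraseOn, this.2] using he
  · obtain ⟨e, he⟩ := hx.nonempty
    exact ⟨e, mem_ones.2 (hx.eq_one e he), by simp [eraseOn, he]⟩

theorem eq_zero_of_ne_zero (hx : IsExchange y S w)
    (hsupp : ∀ e, y' e ≠ 0 → y e ≠ 0 ∧ e ∉ S) (he : w e ≠ 0) : y' e = 0 := by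
  by_contra h
  exact (hsupp e h).2 (hx.mem_of_ne_zero e he)

theorem incSum_eq_zero (hx : IsExchange y S w)
    (hsupp : ∀ e, y' e ≠ 0 → y e ≠ 0 ∧ e ∉ S) {v : V} (hv : incSum w v ≠ 0) :
    incSum y' v = 0 := by
  by_contra h
  obtain ⟨f, hvf, hf⟩ := exists_mem_of_incSum_ne_zero h
  exact (hsupp f hf).2 (hx.mem_of_incSum_ne_zero v hv f hvf (hsupp f hf).1)

theorem isTwoMatching_add (hx : IsExchange y S w) (hy : IsTwoMatching G y)
    (hy' : IsTwoMatching G y') (hsupp : ∀ e, y' e ≠ 0 → y e ≠ 0 ∧ e ∉ S) :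
    IsTwoMatching G (y' + w) := by
  refine isTwoMatching_of_incSum_le (fun e he => ?_) (fun v => ?_)
  · by_cases he' : y' e = 0
    · exact hy.1 e (by rw [hx.eq_one e (hx.mem_of_ne_zero e (by simpa [he'] using he))]; omega)
    · exact hy'.1 e he'
  · rw [incSum_add]
    by_cases hv : incSum w v = 0
    · simpa [hv] using hy'.incSum_le v
    · simpa [hx.incSum_eq_zero hsupp hv] using hx.incSum_le v

theorem size_le_size_add (hx : IsExchange y S w) (h : size (eraseOn S y) ≤ size y') :
    size y ≤ size (y' + w) := by
  rw [size_add, ← hx.size_eraseOn_add_card]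
  exact Nat.add_le_add h hx.card_le_size

theorem ne_zero_of_add_ne_zero (hx : IsExchange y S w)
    (hsupp : ∀ e, y' e ≠ 0 → y e ≠ 0 ∧ e ∉ S) (he : (y' + w) e ≠ 0) : y e ≠ 0 := by
  by_cases he' : y' e = 0
  · rw [hx.eq_one e (hx.mem_of_ne_zero e (by simpa [he'] using he))]
    omega
  · exact (hsupp e he').1

end IsExchange

theorem IsTwoMatching.isExchange_pendant (hy : IsTwoMatching G y) {v u : V}
    (hvu : (oneGraph y).neighborSet v = {u}) :
    IsExchange y ((ones y).filter (u ∈ ·)) (Pi.single s(v, u) 2) := by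
  have hone : ∀ {t}, y s(v, t) = 1 ↔ t = u := by
    intro t
    rw [← hy.oneGraph_adj_iff, ← SimpleGraph.mem_neighborSet, hvu, Set.mem_singleton_iff]
  refine ⟨fun e he => mem_ones.1 (Finset.mem_filter.1 he).1, ⟨s(v, u), by simp [hone]⟩,
    fun e he => ?_, fun x => ?_, fun x hx f hxf hf => ?_, ?_⟩
  · obtain rfl : e = s(v, u) := by by_contra h; simp [h] at he
    simp [hone]
  · rw [incSum_single]
    split_ifs <;> omega
  · have hx : x ∈ s(v, u) := by by_contra h; simp [incSum_single, h] at hx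
    have hf1 := hy.eq_one_of_eq_one (hone.2 rfl) hx hxf hf
    refine Finset.mem_filter.2 ⟨mem_ones.2 hf1, ?_⟩
    rcases Sym2.mem_iff.1 hx with rfl | rfl
    · obtain ⟨t, rfl⟩ := Sym2.mem_iff_exists.1 hxf
      simp [hone.1 hf1]
    · exact hxf
  · rw [size_single]
    exact hy.card_le_two (fun e he => (Finset.mem_filter.1 he).2)
      (fun e he => mem_ones.1 (Finset.mem_filter.1 he).1)

theorem IsTwoMatching.isExchange_of_isCycle {z : V} {c : G.Walk z z} (hy : IsTwoMatching G y)
    (hc : c.IsCycle) (hce : ∀ e ∈ c.edges, y e = 1) (hw : ∀ e, w e ≠ 0 → e ∈ c.edges)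
    (hw2 : ∀ v, incSum w v ≤ 2) (hsize : c.length ≤ size w) :
    IsExchange y c.edges.toFinset w := by
  refine ⟨fun e he => hce e (List.mem_toFinset.1 he), ?_,
    fun e he => List.mem_toFinset.2 (hw e he), hw2, fun x hx f hxf hf => ?_, ?_⟩
  · obtain ⟨e, he, -⟩ :=
      (c.mem_support_iff_exists_mem_edges_of_not_nil hc.not_nil).1 c.start_mem_support
    exact ⟨e, List.mem_toFinset.2 he⟩
  · obtain ⟨e, hxe, he⟩ := exists_mem_of_incSum_ne_zero hx
    have hxc : x ∈ c.support :=
      SimpleGraph.Walk.mem_support_iff_exists_mem_edges.2 (Or.inr ⟨e, hw e he, hxe⟩)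
    exact List.mem_toFinset.2 (hy.mem_edges_of_mem_support hc hce hxc hxf hf)
  · rwa [List.toFinset_card_of_nodup hc.edges_nodup, SimpleGraph.Walk.length_edges]

theorem IsTwoMatching.isExchange_indicator {z : V} {c : G.Walk z z} (hy : IsTwoMatching G y)
    (hc : c.IsCycle) (hce : ∀ e ∈ c.edges, y e = 1) :
    IsExchange y c.edges.toFinset (fun e => if e ∈ c.edges then 1 else 0) := by
  refine hy.isExchange_of_isCycle hc hce (fun e he => by simpa using he) (fun x => ?_) ?_
  · simp only [incSum, Finset.sum_boole]
    exact hy.card_le_two (fun e he => (Finset.mem_filter.1 (Finset.mem_filter.1 he).1).2)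
      (fun e he => hce e (Finset.mem_filter.1 he).2)
  · have : Finset.univ.filter (· ∈ c.edges) = c.edges.toFinset := by ext; simp
    simp [size, Finset.sum_boole, this, List.toFinset_card_of_nodup hc.edges_nodup]

end Exchange

section Alternating

variable {G : SimpleGraph V}

def alternating : ∀ {u v : V}, G.Walk u v → Bool → Sym2 V → ℕ
  | _, _, .nil, _ => 0
  | _, _, .cons (u := a) (v := b) _ q, t => alternating q (!t) + Pi.single s(a, b) (2 * t.toNat)

theorem mem_edges_of_alternating_ne_zero {u v : V} {p : G.Walk u v} {t : Bool} {e : Sym2 V}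
    (h : alternating p t e ≠ 0) : e ∈ p.edges := by
  induction p generalizing t with
  | nil => simp [alternating] at h
  | @cons a b _ _ q ih =>
    by_cases hq : alternating q (!t) e = 0
    · obtain rfl : e = s(a, b) := by by_contra he; simp [alternating, hq, he] at h
      simp
    · exact List.mem_cons_of_mem _ (ih hq)

theorem even_alternating {u v : V} (p : G.Walk u v) (t : Bool) (e : Sym2 V) :
    Even (alternating p t e) := by
  induction p generalizing t with
  | nil => simp [alternating]
  | cons _ q ih =>
    simp only [alternating, Pi.add_apply, Pi.single_apply]
    split_ifs <;> simp [ih, Nat.even_add]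

variable [Fintype V]

theorem size_alternating {u v : V} (p : G.Walk u v) (t : Bool) :
    size (alternating p t) = 2 * ((p.length + t.toNat) / 2) := by
  induction p generalizing t with
  | nil => cases t <;> simp [alternating, size]
  | cons _ q ih =>
    rw [alternating, size_add, ih, size_single, SimpleGraph.Walk.length_cons]
    cases t <;> simp [Nat.add_assoc, Nat.add_div_right, Nat.mul_succ]

theorem incSum_alternating_le {u v : V} {p : G.Walk u v} (hp : p.IsPath) (t : Bool) :
    incSum (alternating p t) u ≤ 2 * t.toNat ∧ ∀ x, incSum (alternating p t) x ≤ 2 := by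
  induction p generalizing t with
  | nil => simp [alternating, incSum]
  | @cons a b _ _ q ih =>
    obtain ⟨hq, ha⟩ := SimpleGraph.Walk.cons_isPath_iff _ _ |>.1 hp
    obtain ⟨ihb, ih⟩ := ih hq (!t)
    have hqa : incSum (alternating q (!t)) a = 0 := by
      by_contra h
      obtain ⟨e, hae, he⟩ := exists_mem_of_incSum_ne_zero h
      exact ha (SimpleGraph.Walk.mem_support_iff_exists_mem_edges.2
        (Or.inr ⟨e, mem_edges_of_alternating_ne_zero he, hae⟩))
    simp only [alternating, incSum_add, incSum_single, Sym2.mem_mk_left, if_true, hqa]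
    refine ⟨by omega, fun x => ?_⟩
    split_ifs with hx
    · rcases Sym2.mem_iff.1 hx with rfl | rfl
      · rw [hqa]
        cases t <;> simp
      · cases t <;> simp at ihb ⊢ <;> omega
    · simpa using ih x

theorem IsTwoMatching.isExchange_alternating {y : Sym2 V → ℕ} {z : V} {c : G.Walk z z}
    (hy : IsTwoMatching G y) (hc : c.IsCycle) (hce : ∀ e ∈ c.edges, y e = 1)
    (heven : Even c.length) : IsExchange y c.edges.toFinset (alternating c.tail true) := by
  -- `c.tail` is a path of odd length: values 2, 0, …, 2 on it and 0 on the closing edge.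
  refine hy.isExchange_of_isCycle hc hce (fun e he => ?_)
    (incSum_alternating_le hc.isPath_tail true).2 ?_
  · have := mem_edges_of_alternating_ne_zero he
    rw [SimpleGraph.Walk.edges_tail] at this
    exact List.mem_of_mem_tail this
  · rw [size_alternating, SimpleGraph.Walk.length_tail, Bool.toNat_true]
    obtain ⟨k, hk⟩ := heven
    omega

end Alternating

section Basic

variable {G : SimpleGraph V} {y w : Sym2 V → ℕ}

theorem isBasic_of_forall_ne_one (h : ∀ e, y e ≠ 1) : IsBasic G y :=
  ⟨∅, by simp, by simp, by ext e; simp [h e]⟩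

theorem IsBasic.add_of_forall_ne_one (hy : IsBasic G y) (hw : ∀ e, w e ≠ 1)
    (hyw : ∀ e, w e ≠ 0 → y e = 0) : IsBasic G (y + w) := by
  obtain ⟨C, hC, hdisj, hones⟩ := hy
  refine ⟨C, hC, hdisj, ?_⟩
  rw [← hones]
  ext e
  by_cases he : w e = 0
  · simp [he]
  · have := hw e
    have := hyw e he
    simp only [Set.mem_ofPred_eq, Pi.add_apply]
    omega

theorem IsBasic.add_indicator [Fintype V] {z : V} {c : G.Walk z z} (hy : IsBasic G y)
    (hc : c.IsCycle) (hodd : Odd c.length)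
    (hyc : ∀ e ∈ c.edges, ∀ x ∈ e, incSum y x = 0) :
    IsBasic G (y + fun e => if e ∈ c.edges then 1 else 0) := by
  obtain ⟨C, hC, hdisj, hones⟩ := hy
  have hy0 : ∀ e ∈ c.edges, y e = 0 := fun e he => by
    induction e using Sym2.ind with
    | _ a b => exact Nat.eq_zero_of_le_zero (hyc _ he a (Sym2.mem_mk_left a b) ▸ le_incSum
      (Sym2.mem_mk_left a b))
  have hdisj_c : ∀ d ∈ C, Disjoint {v | v ∈ c.support} {v | v ∈ d.2.support} := by
    intro d hd
    refine Set.disjoint_left.2 fun x hxc hxd => ?_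
    obtain ⟨e, hce, hxe⟩ := (c.mem_support_iff_exists_mem_edges_of_not_nil hc.not_nil).1 hxc
    obtain ⟨f, hdf, hxf⟩ :=
      (d.2.mem_support_iff_exists_mem_edges_of_not_nil (hC d hd).1.not_nil).1 hxd
    have hf : y f = 1 := (Set.ext_iff.1 hones f).2 (Set.mem_biUnion hd hdf)
    have := (le_incSum (y := y) hxf).trans_eq (hyc e hce x hxe)
    omega
  refine ⟨insert ⟨z, c⟩ C, ?_, ?_, ?_⟩
  · rintro d (rfl | hd)
    exacts [⟨hc, hodd⟩, hC d hd]
  · exact Set.pairwise_insert.2 ⟨hdisj, fun d hd _ => ⟨hdisj_c d hd, (hdisj_c d hd).symm⟩⟩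
  · rw [Set.biUnion_insert, ← hones]
    ext e
    by_cases he : e ∈ c.edges <;> simp [he, hy0]

end Basic

section Main

variable [Fintype V] {G : SimpleGraph V} {y : Sym2 V → ℕ}

theorem IsTwoMatching.exists_isExchange (hy : IsTwoMatching G y) (hne : (ones y).Nonempty) :
    ∃ S w, IsExchange y S w ∧ ((∀ e, w e ≠ 1) ∨ ∃ (z : V) (c : G.Walk z z),
      c.IsCycle ∧ Odd c.length ∧ w = fun e => if e ∈ c.edges then 1 else 0) := by
  by_cases hcyc : (oneGraph y).IsCycles
  · obtain ⟨z, c, hc, hce⟩ := hy.exists_isCycle hcyc hne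
    rcases Nat.even_or_odd c.length with heven | hodd
    · exact ⟨_, _, hy.isExchange_alternating hc hce heven,
        Or.inl fun e h => Nat.not_even_one (h ▸ even_alternating _ _ e)⟩
    · exact ⟨_, _, hy.isExchange_indicator hc hce, Or.inr ⟨z, c, hc, hodd, rfl⟩⟩
  · obtain ⟨v, u, hvu⟩ := hy.exists_neighborSet_oneGraph_eq_singleton hcyc
    refine ⟨_, _, hy.isExchange_pendant hvu, Or.inl fun e => ?_⟩
    rw [Pi.single_apply]
    split_ifs <;> omega

theorem IsTwoMatching.exists_isBasic (hy : IsTwoMatching G y) :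
    ∃ y', IsTwoMatching G y' ∧ IsBasic G y' ∧ size y ≤ size y' ∧
      ∀ e, y' e ≠ 0 → y e ≠ 0 := by
  induction hn : (ones y).card using Nat.strong_induction_on generalizing y with
  | _ n ih =>
    rcases (ones y).eq_empty_or_nonempty with h0 | hne
    · refine ⟨y, hy, isBasic_of_forall_ne_one fun e he => ?_, le_rfl, fun _ h => h⟩
      simpa [h0] using mem_ones.2 he
    obtain ⟨S, w, hx, hw⟩ := hy.exists_isExchange hne
    obtain ⟨y', hy', hbasic, hsize, hsupp'⟩ :=
      ih _ (hn ▸ hx.card_ones_eraseOn_lt) (hy.eraseOn S) rfl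
    have hsupp : ∀ e, y' e ≠ 0 → y e ≠ 0 ∧ e ∉ S := fun e he =>
      eraseOn_ne_zero.1 (hsupp' e he)
    refine ⟨y' + w, hx.isTwoMatching_add hy hy' hsupp, ?_, hx.size_le_size_add hsize,
      fun e => hx.ne_zero_of_add_ne_zero hsupp⟩
    rcases hw with hw | ⟨z, c, hc, hodd, rfl⟩
    · exact hbasic.add_of_forall_ne_one hw fun e => hx.eq_zero_of_ne_zero hsupp
    · refine hbasic.add_indicator hc hodd fun e he x hxe => hx.incSum_eq_zero hsupp ?_
      exact Nat.one_le_iff_ne_zero.1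
        (by simpa [he] using le_incSum (y := fun e => if e ∈ c.edges then 1 else 0) hxe)

end Main

theorem stmt12 [Fintype V] (G : SimpleGraph V) (x : Sym2 V → ℕ)
    (hx : IsTwoMatching G x) :
    ∃ x', IsTwoMatching G x' ∧ IsBasic G x' ∧ size x ≤ size x' := by
  obtain ⟨x', hx', hbasic, hsize, -⟩ := hx.exists_isBasic
  exact ⟨x', hx', hbasic, hsize⟩

end

end TF
end

section
/- Every 2k-regular finite simple undirected graph with k ≥ 2 has a 4-regular spanning subgraph; moreover such a subgraph can be taken as the union of two edge-disjoint 2-regular spanning subgraphs. -/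
open scoped Classical

namespace TF

noncomputable section

variable {V : Type*} {W : Type*}

/-! Petersen's argument. Hall's theorem gives an orientation of `G` in which every vertex has
in- and out-degree `k`. The bipartite multigraph of tails against heads is then `k`-regular, hence
has a perfect matching; in `G` such a matching is a set of edges in which every vertex is the tail
of one edge and the head of another, i.e. a 2-factor. Removing it leaves a `(k - 1)`-regular
bipartite multigraph, and as `k ≥ 2` a second perfect matching yields a second, edge-disjoint
2-factor. -/

open Finset

section Diregular

variable {α : Type*} (tail head : α → V)

/-- A multidigraph is encoded by its arcs `A`, arc `a` running from `tail a` to `head a`;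
it is `d`-diregular if every vertex has in- and out-degree `d`. -/
def IsDiregular (A : Finset α) (d : ℕ) : Prop :=
  ∀ v : V, #{a ∈ A | tail a = v} = d ∧ #{a ∈ A | head a = v} = d

variable {tail head}

theorem card_filter_mem_eq_card_mul {g : α → V} {A : Finset α} {d : ℕ}
    (hg : ∀ v, #{a ∈ A | g a = v} = d) (S : Finset V) : #{a ∈ A | g a ∈ S} = #S * d := by
  rw [← sum_card_fiberwise_eq_card_filter, sum_congr rfl fun v _ => hg v, sum_const, smul_eq_mul]

theorem card_filter_image_eq_one [Fintype V] [DecidableEq α] {m : V → α} {g : α → V}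
    (hg : (g ∘ m).Bijective) (v : V) : #{a ∈ univ.image m | g a = v} = 1 := by
  obtain ⟨w, hw⟩ := hg.2 v
  refine card_eq_one.2 ⟨m w, ext fun a => ?_⟩
  simp only [mem_filter, mem_image, mem_univ, true_and, mem_singleton]
  constructor
  · rintro ⟨⟨u, rfl⟩, hu⟩
    exact congrArg m (hg.1 (hu.trans hw.symm))
  · rintro rfl
    exact ⟨⟨w, rfl⟩, hw⟩

theorem IsDiregular.sdiff [DecidableEq α] {A M : Finset α} {d e : ℕ}
    (hA : IsDiregular tail head A d) (hM : IsDiregular tail head M e) (hMA : M ⊆ A) :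
    IsDiregular tail head (A \ M) (d - e) := by
  have key (g : α → V) (v : V) :
      #{a ∈ A \ M | g a = v} = #{a ∈ A | g a = v} - #{a ∈ M | g a = v} := by
    rw [← card_sdiff_of_subset (filter_subset_filter _ hMA)]
    congr 1
    ext a
    simp only [mem_filter, mem_sdiff]
    tauto
  exact fun v => ⟨by rw [key, (hA v).1, (hM v).1], by rw [key, (hA v).2, (hM v).2]⟩

theorem IsDiregular.exists_subset_isDiregular_one [Fintype V] [DecidableEq α] {A : Finset α}
    {d : ℕ} (h : IsDiregular tail head A d) (hd : 0 < d) : ∃ M ⊆ A, IsDiregular tail head M 1 := by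
  have hall : ∀ S : Finset V, #S ≤ #(S.biUnion fun v => {a ∈ A | tail a = v}.image head) := by
    intro S
    refine Nat.le_of_mul_le_mul_right ?_ hd
    calc #S * d = #{a ∈ A | tail a ∈ S} :=
          (card_filter_mem_eq_card_mul (fun v => (h v).1) S).symm
      _ ≤ #{a ∈ A | head a ∈ S.biUnion fun v => {a ∈ A | tail a = v}.image head} := by
        refine card_le_card fun a ha => ?_
        simp only [mem_filter, mem_biUnion, mem_image] at ha ⊢
        exact ⟨ha.1, tail a, ha.2, a, ⟨ha.1, rfl⟩, rfl⟩
      _ = _ := card_filter_mem_eq_card_mul (fun v => (h v).2) _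
  obtain ⟨f, hf_inj, hf⟩ := (all_card_le_biUnion_card_iff_exists_injective _).1 hall
  choose m hm using fun v => mem_image.1 (hf v)
  simp only [mem_filter] at hm
  have htail : tail ∘ m = id := funext fun v => (hm v).1.2
  have hhead : head ∘ m = f := funext fun v => (hm v).2
  refine ⟨univ.image m, fun a ha => ?_, fun v => ⟨card_filter_image_eq_one ?_ v,
    card_filter_image_eq_one ?_ v⟩⟩
  · obtain ⟨v, -, rfl⟩ := mem_image.1 ha
    exact (hm v).1.1
  · exact htail ▸ Function.bijective_id
  · exact hhead ▸ Finite.injective_iff_bijective.1 hf_inj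

end Diregular

section Orientation

variable {G : SimpleGraph V}

theorem card_filter_mem_edgeSet_eq_degree [Fintype V] (v : V) :
    #{e : G.edgeSet | v ∈ (e : Sym2 V)} = G.degree v := by
  rw [← Fintype.card_subtype, ← G.card_incidenceSet_eq_degree]
  exact Fintype.card_congr (Equiv.subtypeSubtypeEquivSubtypeInter (· ∈ G.edgeSet) (v ∈ ·))

theorem card_filter_mem_eq_add {tail head : G.edgeSet → V}
    (horient : ∀ e : G.edgeSet, s(tail e, head e) = e) (M : Finset G.edgeSet) (v : V) :
    #{e ∈ M | v ∈ e.val} = #{e ∈ M | tail e = v} + #{e ∈ M | head e = v} := by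
  rw [← card_union_of_disjoint, ← filter_or]
  · refine congrArg card (filter_congr fun e _ => ?_)
    rw [← horient e, Sym2.mem_iff, eq_comm, @eq_comm _ v]
  · refine disjoint_filter.2 fun e _ ht hh => G.ne_of_adj ?_ (ht.trans hh.symm)
    rw [← SimpleGraph.mem_edgeSet, horient]
    exact e.2

theorem isTwoRegularSpanning_image_val {tail head : G.edgeSet → V}
    (horient : ∀ e : G.edgeSet, s(tail e, head e) = e) {M : Finset G.edgeSet}
    (hM : IsDiregular tail head M 1) :
    IsTwoRegularSpanning G (Subtype.val '' (M : Set G.edgeSet)) := by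
  refine ⟨Subtype.coe_image_subset _ _, fun v => ?_⟩
  have : {e ∈ Subtype.val '' (M : Set G.edgeSet) | v ∈ e} =
      Subtype.val '' (({e ∈ M | v ∈ e.val} : Finset G.edgeSet) : Set G.edgeSet) := by
    ext
    simp
  rw [this, Set.ncard_image_of_injective _ Subtype.val_injective, Set.ncard_coe_finset,
    card_filter_mem_eq_add horient, (hM v).1, (hM v).2]

theorem IsTwoRegularSpanning.ncard_sep_mem_union_eq_four [Finite V] {F₁ F₂ : Set (Sym2 V)}
    (h₁ : IsTwoRegularSpanning G F₁) (h₂ : IsTwoRegularSpanning G F₂) (hdisj : Disjoint F₁ F₂)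
    (v : V) : {e ∈ F₁ ∪ F₂ | v ∈ e}.ncard = 4 := by
  rw [show {e ∈ F₁ ∪ F₂ | v ∈ e} = {e ∈ F₁ | v ∈ e} ∪ {e ∈ F₂ | v ∈ e} from Set.sep_union,
    Set.ncard_union_eq (hdisj.mono (Set.sep_subset _ _) (Set.sep_subset _ _)), h₁.2, h₂.2]

theorem card_le_card_biUnion_mul_of_isRegularOfDegree [Fintype V] {k : ℕ}
    (hreg : G.IsRegularOfDegree (2 * k)) (s : Finset G.edgeSet) :
    #s ≤ #(s.biUnion fun e => {v | v ∈ (e : Sym2 V)}) * k := by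
  set N := s.biUnion fun e => ({v | v ∈ (e : Sym2 V)} : Finset V)
  suffices #s * 2 ≤ #N * (2 * k) by linarith
  refine card_mul_le_card_mul (fun (e : G.edgeSet) (v : V) => v ∈ (e : Sym2 V)) ?_ ?_
  · rintro ⟨e, he⟩ hes
    induction e using Sym2.ind with | _ a b => ?_
    rw [← card_pair (G.ne_of_adj he)]
    refine card_le_card fun x hx => ?_
    have hx' : x ∈ s(a, b) := Sym2.mem_iff.2 (by simpa using hx)
    simp only [bipartiteAbove, mem_filter, N, mem_biUnion]
    exact ⟨⟨_, hes, by simpa using hx'⟩, hx'⟩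
  · intro v _
    rw [← hreg v, ← card_filter_mem_edgeSet_eq_degree]
    exact card_le_card (filter_subset_filter _ (subset_univ s))

theorem card_edgeSet_eq_mul_of_isRegularOfDegree [Fintype V] {k : ℕ}
    (hreg : G.IsRegularOfDegree (2 * k)) : Fintype.card G.edgeSet = Fintype.card V * k := by
  have := G.sum_degrees_eq_twice_card_edges
  rw [sum_congr rfl fun v _ => hreg v, sum_const, card_univ, smul_eq_mul,
    SimpleGraph.edgeFinset_card] at this
  linarith

/-- Hall's theorem, applied to edges versus pairs (endpoint, slot in `Fin k`), makes every vertex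
the tail of at most `k` edges; as there are `|V| k` edges, of exactly `k`. -/
theorem exists_diregular_orientation [Fintype V] {k : ℕ}
    (hreg : G.IsRegularOfDegree (2 * k)) :
    ∃ tail head : G.edgeSet → V,
      (∀ e : G.edgeSet, s(tail e, head e) = e) ∧ IsDiregular tail head univ k := by
  obtain ⟨g, hg_inj, hg⟩ := (all_card_le_biUnion_card_iff_exists_injective fun e : G.edgeSet =>
      ({v | v ∈ (e : Sym2 V)} : Finset V) ×ˢ (univ : Finset (Fin k))).1 fun s => calc
      #s ≤ #(s.biUnion fun e => {v | v ∈ (e : Sym2 V)}) * k :=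
        card_le_card_biUnion_mul_of_isRegularOfDegree hreg s
      _ = #((s.biUnion fun e => {v | v ∈ (e : Sym2 V)}) ×ˢ (univ : Finset (Fin k))) := by
        rw [card_product, card_fin]
      _ ≤ _ := card_le_card fun p hp => by
        obtain ⟨e, he, hp₁⟩ := mem_biUnion.1 (mem_product.1 hp).1
        exact mem_biUnion.2 ⟨e, he, mem_product.2 ⟨hp₁, mem_univ _⟩⟩
  have hg_mem (e : G.edgeSet) : (g e).1 ∈ (e : Sym2 V) := by
    simpa using (mem_product.1 (hg e)).1
  have horient : ∀ e, s((g e).1, Sym2.Mem.other (hg_mem e)) = e := fun e => Sym2.other_spec _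
  have hout_le : ∀ v, #{e | (g e).1 = v} ≤ k := fun v => by
    simpa using card_le_card_of_injOn (fun e => (g e).2) (fun _ _ => mem_coe.2 (mem_univ _))
      (fun e he e' he' h => hg_inj (Prod.ext (by simp_all) h))
  have hsum : ∑ v, #{e | (g e).1 = v} = ∑ v : V, k := by
    refine (sum_card_fiberwise_eq_card_filter univ univ fun e => (g e).1).trans ?_
    simpa using card_edgeSet_eq_mul_of_isRegularOfDegree hreg
  have hout : ∀ v, #{e | (g e).1 = v} = k := fun v =>
    (sum_eq_sum_iff_of_le fun v _ => hout_le v).1 hsum v (mem_univ v)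
  refine ⟨_, _, horient, fun v => ⟨hout v, ?_⟩⟩
  have := card_filter_mem_eq_add horient univ v
  rw [card_filter_mem_edgeSet_eq_degree, hreg v, hout v] at this
  omega

end Orientation

theorem stmt14 [Fintype V] (G : SimpleGraph V) (k : ℕ) (hk : 2 ≤ k)
    (hreg : G.IsRegularOfDegree (2 * k)) :
    ∃ F₁ F₂ : Set (Sym2 V), IsTwoRegularSpanning G F₁ ∧ IsTwoRegularSpanning G F₂ ∧
      Disjoint F₁ F₂ ∧ ∀ v : V, {e ∈ F₁ ∪ F₂ | v ∈ e}.ncard = 4 := by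
  obtain ⟨tail, head, horient, hdir⟩ := exists_diregular_orientation hreg
  obtain ⟨M₁, -, hM₁⟩ := hdir.exists_subset_isDiregular_one (by omega)
  obtain ⟨M₂, hM₂_sub, hM₂⟩ :=
    (hdir.sdiff hM₁ (subset_univ M₁)).exists_subset_isDiregular_one (by omega)
  have hF₁ := isTwoRegularSpanning_image_val horient hM₁
  have hF₂ := isTwoRegularSpanning_image_val horient hM₂
  have hdisj :
      Disjoint (Subtype.val '' (M₁ : Set G.edgeSet)) (Subtype.val '' (M₂ : Set G.edgeSet)) :=
    (Set.disjoint_image_iff Subtype.val_injective).2 <| disjoint_coe.2 <|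
      disjoint_left.2 fun _ h₁ h₂ => (mem_sdiff.1 (hM₂_sub h₂)).2 h₁
  exact ⟨_, _, hF₁, hF₂, hdisj, hF₁.ncard_sep_mem_union_eq_four hF₂ hdisj⟩

end

end TF
end

section
/- Let G be a d-regular finite simple undirected graph on n nodes with d = 2k + 1, k ≥ 2. Then G has a spanning subgraph H in which every node has degree 3 or 4 and the number of nodes of degree 3 in H is at most 8n/(d + 1). -/
/-!
Orient the edges of `G` so that in- and out-degree differ by at most one at every node (split off
two edges `va`, `vb` into one edge `ab` and induct); as `d = 2k + 1`, all in- and out-degrees are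
then `k` or `k + 1`. The bipartite multigraph of tails and heads thus has maximum degree `k + 1`,
and by Hall's theorem it is covered by `k + 1` permutations `σ i`. Colouring an edge `u → σ i u`
by `i` gives `k + 1` classes in which every node has degree at most `2`; since `2 (k + 1) = d + 1`,
a node has degree `2` in every class but one, where it has degree `1`. The deficiencies of the
classes therefore add up to `n`, and the union of the two classes with the smallest deficiencies
has all degrees `3` or `4`, with at most `2n / (k + 1) = 4n / (d + 1)` nodes of degree `3`.
-/

open scoped Classical

open Finset

theorem Multiset.exists_eq_cons_cons_of_two_le_countP {α : Type*} {p : α → Prop}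
    [DecidablePred p] {s : Multiset α} (h : 2 ≤ s.countP p) :
    ∃ a b t, p a ∧ p b ∧ s = a ::ₘ b ::ₘ t := by
  obtain ⟨a, ha, hpa⟩ := Multiset.countP_pos.mp (by omega : 0 < s.countP p)
  obtain ⟨s₁, rfl⟩ := Multiset.exists_cons_of_mem ha
  rw [Multiset.countP_cons_of_pos _ hpa] at h
  obtain ⟨b, hb, hpb⟩ := Multiset.countP_pos.mp (by omega : 0 < s₁.countP p)
  obtain ⟨t, rfl⟩ := Multiset.exists_cons_of_mem hb
  exact ⟨a, b, t, hpa, hpb, rfl⟩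

theorem Multiset.sum_count_prodMk_left {α β : Type*} [Fintype β] (D : Multiset (α × β)) (a : α) :
    ∑ b, D.count (a, b) = D.countP (·.1 = a) := by
  induction D using Multiset.induction_on with
  | empty => simp
  | cons x D ih =>
    simp only [Multiset.count_cons, Finset.sum_add_distrib, ih, Multiset.countP_cons]
    congr 1
    rcases x with ⟨a', b'⟩
    by_cases ha : a' = a <;> simp [ha, Ne.symm]

theorem Multiset.sum_count_prodMk_right {α β : Type*} [Fintype α] (D : Multiset (α × β)) (b : β) :
    ∑ a, D.count (a, b) = D.countP (·.2 = b) := by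
  induction D using Multiset.induction_on with
  | empty => simp
  | cons x D ih =>
    simp only [Multiset.count_cons, Finset.sum_add_distrib, ih, Multiset.countP_cons]
    congr 1
    rcases x with ⟨a', b'⟩
    by_cases hb : b' = b <;> simp [hb, Ne.symm]

theorem Multiset.exists_balanced_orientation {V : Type*} (E : Multiset (Sym2 V)) :
    ∃ D : Multiset (V × V), D.map (fun x => s(x.1, x.2)) = E ∧ ∀ v,
      D.countP (·.1 = v) ≤ D.countP (·.2 = v) + 1 ∧
        D.countP (·.2 = v) ≤ D.countP (·.1 = v) + 1 := by
  by_cases h : ∃ v, 2 ≤ E.countP (v ∈ ·)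
  · obtain ⟨v, hv⟩ := h
    obtain ⟨e₁, e₂, E₀, ⟨a, rfl⟩, ⟨b, rfl⟩, rfl⟩ :=
      Multiset.exists_eq_cons_cons_of_two_le_countP (p := fun e => ∃ a, e = s(v, a))
        (by simpa only [Sym2.mem_iff_exists] using hv)
    -- orient `ab` as `x`, then route `x` through `v`: no in/out difference changes
    obtain ⟨D', hD'E, hD'⟩ := Multiset.exists_balanced_orientation (s(a, b) ::ₘ E₀)
    obtain ⟨x, hx, hxab⟩ := Multiset.mem_map.mp (hD'E ▸ Multiset.mem_cons_self _ _)
    obtain ⟨R, rfl⟩ := Multiset.exists_cons_of_mem hx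
    refine ⟨(x.1, v) ::ₘ (v, x.2) ::ₘ R, ?_, fun w => ?_⟩
    · rw [Multiset.map_cons, hxab, Multiset.cons_inj_right] at hD'E
      rcases Sym2.eq_iff.mp hxab with ⟨h1, h2⟩ | ⟨h1, h2⟩
      · simp [hD'E, h1, h2, Sym2.eq_swap]
      · simp [hD'E, h1, h2, Sym2.eq_swap, Multiset.cons_swap]
    · have := hD' w
      simp only [Multiset.countP_cons] at this ⊢
      split_ifs at this ⊢ <;> omega
  · -- every node lies on at most one edge, so any orientation is balanced
    push Not at h
    refine ⟨E.map Quot.out, ?_, fun v => ?_⟩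
    · rw [Multiset.map_map]
      exact (Multiset.map_congr rfl fun e _ => Quot.out_eq e).trans (Multiset.map_id E)
    have hle : ∀ q : V × V → Prop, (∀ x, q x → v = x.1 ∨ v = x.2) →
        (E.map Quot.out).countP q ≤ 1 := by
      intro q hq
      rw [Multiset.countP_map]
      refine (Multiset.card_le_card (Multiset.monotone_filter_right E fun e hqe => ?_)).trans
        (Nat.le_of_lt_succ ((Multiset.countP_eq_card_filter ..).symm.trans_lt (h v)))
      rw [← Quot.out_eq e]
      exact (hq _ hqe).elim (· ▸ Sym2.mem_mk_left _ _) (· ▸ Sym2.mem_mk_right _ _)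
    have h1 := hle (·.1 = v) (fun x hx => Or.inl hx.symm)
    have h2 := hle (·.2 = v) (fun x hx => Or.inr hx.symm)
    omega
termination_by Multiset.card E
decreasing_by simp_all

theorem exists_ne_card_mul_add_le {ι : Type*} [Fintype ι] (f : ι → ℕ)
    (h : 1 < Fintype.card ι) :
    ∃ i j, i ≠ j ∧ Fintype.card ι * (f i + f j) ≤ 2 * ∑ l, f l := by
  obtain ⟨i, -, hi⟩ := exists_min_image univ f (univ_nonempty_iff.mpr
    (Fintype.card_pos_iff.mp (by omega)))
  have hne : (univ.erase i).Nonempty := by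
    rw [← card_pos, card_erase_of_mem (mem_univ i), card_univ]; omega
  obtain ⟨j, hj, hj'⟩ := exists_min_image _ f hne
  refine ⟨i, j, (ne_of_mem_erase hj).symm, ?_⟩
  have hsum : f i + (Fintype.card ι - 1) * f j ≤ ∑ l, f l := by
    rw [← add_sum_erase univ f (mem_univ i)]
    gcongr
    calc (Fintype.card ι - 1) * f j = ∑ _l ∈ univ.erase i, f j := by
          rw [sum_const, card_erase_of_mem (mem_univ i), card_univ, smul_eq_mul]
      _ ≤ ∑ l ∈ univ.erase i, f l := sum_le_sum hj'
  obtain ⟨c, hc⟩ : ∃ c, Fintype.card ι = c + 2 := ⟨_, (Nat.sub_add_cancel h).symm⟩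
  rw [hc, show c + 2 - 1 = c + 1 by omega] at hsum
  rw [hc]
  nlinarith [Nat.mul_le_mul_left c (hi j (mem_univ j))]

theorem sum_sigma_ite_fst_eq {ι : Type*} [Fintype ι] (c : ι → ℕ) (i : ι) :
    ∑ x : Σ i, Fin (c i), (if x.1 = i then 1 else 0) = c i := by
  rw [Fintype.sum_sigma]
  simp [apply_ite Finset.card]

namespace Matrix

theorem exists_rowSums_colSums_eq {ι κ : Type*} [Fintype ι] [Fintype κ] (a : ι → ℕ) (b : κ → ℕ)
    (h : ∑ i, a i = ∑ j, b j) :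
    ∃ P : Matrix ι κ ℕ, (∀ i, ∑ j, P i j = a i) ∧ ∀ j, ∑ i, P i j = b j := by
  -- match the `a i` copies of row `i` with the `b j` copies of column `j`
  obtain ⟨φ⟩ : Nonempty ((Σ i, Fin (a i)) ≃ Σ j, Fin (b j)) :=
    Fintype.card_eq.mp (by simpa using h)
  refine ⟨fun i j => ∑ x, if x.1 = i ∧ (φ x).1 = j then 1 else 0, fun i => ?_, fun j => ?_⟩
  · rw [Finset.sum_comm, ← sum_sigma_ite_fst_eq a i]
    refine Finset.sum_congr rfl fun x _ => ?_
    by_cases hx : x.1 = i <;> simp [hx]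
  · rw [Finset.sum_comm, ← sum_sigma_ite_fst_eq b j, ← φ.sum_comp]
    refine Finset.sum_congr rfl fun x _ => ?_
    by_cases hx : (φ x).1 = j <;> simp [hx]

variable {ι : Type*} [Fintype ι]

theorem exists_perm_forall_ne_zero (M : Matrix ι ι ℕ) {m : ℕ} (hm : 0 < m)
    (hrow : ∀ u, ∑ v, M u v = m) (hcol : ∀ v, ∑ u, M u v = m) :
    ∃ σ : Equiv.Perm ι, ∀ u, M u (σ u) ≠ 0 := by
  set N : ι → Finset ι := fun u => {v | M u v ≠ 0}
  have hall : ∀ A : Finset ι, #A ≤ #(A.biUnion N) := by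
    intro A
    refine Nat.le_of_mul_le_mul_right ?_ hm
    calc #A * m = ∑ u ∈ A, ∑ v ∈ N u, M u v := by simp [N, Finset.sum_filter_ne_zero, hrow]
      _ ≤ ∑ u ∈ A, ∑ v ∈ A.biUnion N, M u v :=
        sum_le_sum fun u hu => sum_le_sum_of_subset (subset_biUnion_of_mem N hu)
      _ ≤ ∑ u, ∑ v ∈ A.biUnion N, M u v := sum_le_sum_of_subset (subset_univ A)
      _ = ∑ v ∈ A.biUnion N, ∑ u, M u v := sum_comm
      _ = #(A.biUnion N) * m := by simp [hcol]
  obtain ⟨g, hginj, hg⟩ := (all_card_le_biUnion_card_iff_exists_injective N).mp hall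
  exact ⟨Equiv.ofBijective g hginj.bijective_of_finite, fun u => (mem_filter.mp (hg u)).2⟩

theorem exists_eq_sum_permMatrix (M : Matrix ι ι ℕ) (m : ℕ)
    (hrow : ∀ u, ∑ v, M u v = m) (hcol : ∀ v, ∑ u, M u v = m) :
    ∃ σ : Fin m → Equiv.Perm ι, M = ∑ i, (σ i).permMatrix ℕ := by
  induction m generalizing M with
  | zero =>
    refine ⟨Fin.elim0, Matrix.ext fun u v => ?_⟩
    simpa using (Finset.sum_eq_zero_iff.mp (hrow u)) v (mem_univ v)
  | succ m ih =>
    obtain ⟨σ₀, hσ₀⟩ := exists_perm_forall_ne_zero M m.succ_pos hrow hcol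
    have hle : ∀ u v, σ₀.permMatrix ℕ u v ≤ M u v := by
      intro u v
      by_cases h : σ₀ u = v
      · simpa [h, Nat.one_le_iff_ne_zero] using h ▸ hσ₀ u
      · simp [h]
    have hsplit : M = (M - σ₀.permMatrix ℕ) + σ₀.permMatrix ℕ :=
      Matrix.ext fun u v => (Nat.sub_add_cancel (hle u v)).symm
    have hrow' : ∀ u, ∑ v, (M - σ₀.permMatrix ℕ) u v = m := fun u => by
      have h := hrow u
      rw [hsplit] at h
      simpa [Finset.sum_add_distrib] using h
    have hcol' : ∀ v, ∑ u, (M - σ₀.permMatrix ℕ) u v = m := fun v => by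
      have h := hcol v
      rw [hsplit] at h
      simpa [Finset.sum_add_distrib, ← Equiv.eq_symm_apply] using h
    obtain ⟨σ, hσ⟩ := ih _ hrow' hcol'
    refine ⟨Fin.cons σ₀ σ, ?_⟩
    rw [Fin.sum_univ_succ, hsplit, hσ, add_comm]
    simp

theorem exists_le_sum_permMatrix (M : Matrix ι ι ℕ) (m : ℕ)
    (hrow : ∀ u, ∑ v, M u v ≤ m) (hcol : ∀ v, ∑ u, M u v ≤ m) :
    ∃ σ : Fin m → Equiv.Perm ι, ∀ u v, M u v ≤ (∑ i, (σ i).permMatrix ℕ) u v := by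
  have hdeficit : ∑ u, (m - ∑ v, M u v) = ∑ v, (m - ∑ u, M u v) := by
    rw [sum_tsub_distrib _ fun u _ => hrow u, sum_tsub_distrib _ fun v _ => hcol v, sum_comm]
  obtain ⟨P, hProw, hPcol⟩ := exists_rowSums_colSums_eq _ _ hdeficit
  obtain ⟨σ, hσ⟩ := exists_eq_sum_permMatrix (M + P) m
    (fun u => by simp [sum_add_distrib, hProw, Nat.add_sub_cancel' (hrow u)])
    (fun v => by simp [sum_add_distrib, hPcol, Nat.add_sub_cancel' (hcol v)])
  exact ⟨σ, fun u v => hσ ▸ Nat.le_add_right _ _⟩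

end Matrix

namespace SimpleGraph

variable {V : Type*} [Fintype V]

theorem exists_orientation_countP_le (G : SimpleGraph V) (m : ℕ) (h : ∀ v, G.degree v ≤ 2 * m) :
    ∃ D : Multiset (V × V), D.map (fun x => s(x.1, x.2)) = G.edgeFinset.val ∧
      ∀ v, D.countP (·.1 = v) ≤ m ∧ D.countP (·.2 = v) ≤ m := by
  obtain ⟨D, hD, hbal⟩ := G.edgeFinset.val.exists_balanced_orientation
  refine ⟨D, hD, fun v => ?_⟩
  have hdeg : D.countP (·.1 = v) + D.countP (·.2 = v) = G.degree v := by
    have hloop : D.filter (fun x => x.1 = v ∧ x.2 = v) = 0 := by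
      refine Multiset.filter_eq_nil.mpr fun x hx hxv => ?_
      have he : s(x.1, x.2) ∈ G.edgeFinset := by
        rw [mem_def, ← hD]; exact Multiset.mem_map_of_mem _ hx
      exact G.loopless.irrefl x.1 (hxv.1.trans hxv.2.symm ▸ G.mem_edgeFinset.mp he)
    rw [← card_incidenceFinset_eq_degree, incidenceFinset_eq_filter, card_def, filter_val,
      ← Multiset.countP_eq_card_filter, ← hD, Multiset.countP_map]
    have hmem : ∀ x : V × V, v ∈ s(x.1, x.2) ↔ x.1 = v ∨ x.2 = v := by
      simp [Sym2.mem_iff, @eq_comm _ v]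
    simp only [hmem, Multiset.countP_eq_card_filter]
    rw [← Multiset.card_add, Multiset.filter_add_filter, hloop, add_zero]
  have := hbal v
  have := h v
  constructor <;> omega

theorem exists_edgeColoring_card_incident_le_two (G : SimpleGraph V) (m : ℕ) [NeZero m]
    (h : ∀ v, G.degree v ≤ 2 * m) :
    ∃ c : Sym2 V → Fin m, ∀ i v, #{e ∈ G.edgeFinset | v ∈ e ∧ c e = i} ≤ 2 := by
  obtain ⟨D, hD, hbound⟩ := G.exists_orientation_countP_le m h
  obtain ⟨σ, hσ⟩ := Matrix.exists_le_sum_permMatrix (fun u v => D.count (u, v)) m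
    (fun u => (D.sum_count_prodMk_left u).trans_le (hbound u).1)
    (fun v => (D.sum_count_prodMk_right v).trans_le (hbound v).2)
  have hcover : ∀ e ∈ G.edgeFinset, ∃ i, ∃ u, e = s(u, σ i u) := by
    intro e he
    rw [mem_def, ← hD] at he
    obtain ⟨x, hx, rfl⟩ := Multiset.mem_map.mp he
    have hpos := (Multiset.count_pos.mpr hx).trans_le (hσ x.1 x.2)
    simp only [Matrix.sum_apply] at hpos
    obtain ⟨i, -, hi⟩ := exists_ne_zero_of_sum_ne_zero hpos.ne'
    refine ⟨i, x.1, ?_⟩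
    rw [show σ i x.1 = x.2 by simpa using hi]
  choose! c hc using hcover
  refine ⟨c, fun i v => (card_le_card
    (t := {s(v, σ i v), s((σ i).symm v, v)}) fun e he => ?_).trans card_le_two⟩
  obtain ⟨heG, hve, hci⟩ := mem_filter.mp he
  obtain ⟨u, rfl⟩ : ∃ u, e = s(u, σ i u) := hci ▸ hc e heG
  rcases Sym2.mem_iff.mp hve with rfl | rfl <;> simp

theorem sum_card_incident_eq_degree {ι : Type*} [Fintype ι] [DecidableEq ι] (G : SimpleGraph V)
    (c : Sym2 V → ι) (v : V) :
    ∑ i, #{e ∈ G.edgeFinset | v ∈ e ∧ c e = i} = G.degree v := by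
  rw [← card_incidenceFinset_eq_degree, incidenceFinset_eq_filter,
    card_eq_sum_card_fiberwise (f := c) fun _ _ => mem_univ _]
  simp [filter_filter]

theorem card_incident_filter_eq_or_eq {ι : Type*} [DecidableEq ι] (G : SimpleGraph V)
    (c : Sym2 V → ι) {i j : ι} (hij : i ≠ j) (v : V) :
    #{e ∈ {e ∈ G.edgeFinset | c e = i ∨ c e = j} | v ∈ e} =
      #{e ∈ G.edgeFinset | v ∈ e ∧ c e = i} + #{e ∈ G.edgeFinset | v ∈ e ∧ c e = j} := by
  rw [← card_union_of_disjoint (disjoint_filter.mpr fun e _ hi hj => hij (hi.2.symm.trans hj.2))]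
  congr 1
  ext e
  simp only [mem_filter, mem_union]
  tauto

theorem IsRegularOfDegree.exists_subgraph_degree_three_four {ι : Type*} [Fintype ι] [DecidableEq ι]
    {G : SimpleGraph V} {k : ℕ} (hreg : G.IsRegularOfDegree (2 * k + 1))
    (hk : 1 ≤ k) (hι : Fintype.card ι = k + 1) (c : Sym2 V → ι)
    (hc : ∀ i v, #{e ∈ G.edgeFinset | v ∈ e ∧ c e = i} ≤ 2) :
    ∃ F ⊆ G.edgeFinset, (∀ v, #{e ∈ F | v ∈ e} = 3 ∨ #{e ∈ F | v ∈ e} = 4) ∧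
      (k + 1) * #{v | #{e ∈ F | v ∈ e} = 3} ≤ 2 * Fintype.card V := by
  set deg : ι → V → ℕ := fun i v => #{e ∈ G.edgeFinset | v ∈ e ∧ c e = i}
  replace hc : ∀ i v, deg i v ≤ 2 := hc
  have hdefect : ∀ v, ∑ i, (2 - deg i v) = 1 := by
    intro v
    have := G.sum_card_incident_eq_degree c v
    rw [sum_tsub_distrib _ fun i _ => hc i v, sum_const, card_univ, hι, this, hreg v]
    simp only [smul_eq_mul]
    omega
  have htotal : ∑ i, ∑ v, (2 - deg i v) = Fintype.card V := by
    rw [sum_comm]; simp [hdefect]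
  obtain ⟨i, j, hij, hpair⟩ := exists_ne_card_mul_add_le (fun i => ∑ v, (2 - deg i v)) (by omega)
  have hpair_le : ∀ v, (2 - deg i v) + (2 - deg j v) ≤ 1 := fun v => by
    have := sum_le_sum_of_subset (f := fun l => 2 - deg l v) (subset_univ {i, j})
    rwa [sum_pair hij, hdefect v] at this
  set F := {e ∈ G.edgeFinset | c e = i ∨ c e = j}
  have hdegF : ∀ v, #{e ∈ F | v ∈ e} = deg i v + deg j v :=
    G.card_incident_filter_eq_or_eq c hij
  have hthree : #{v | #{e ∈ F | v ∈ e} = 3} = ∑ v, ((2 - deg i v) + (2 - deg j v)) := by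
    rw [card_filter]
    refine sum_congr rfl fun v _ => ?_
    have := hpair_le v; have := hc i v; have := hc j v
    rw [hdegF]
    split_ifs <;> omega
  refine ⟨F, filter_subset _ _, fun v => ?_, ?_⟩
  · have := hpair_le v; have := hc i v; have := hc j v
    rw [hdegF]
    omega
  · rw [hthree, sum_add_distrib, ← hι, ← htotal]
    exact hpair

end SimpleGraph

namespace TF

noncomputable section

variable {V : Type*} {W : Type*}

theorem stmt15 [Fintype V] (G : SimpleGraph V) (k d : ℕ) (hk : 2 ≤ k)
    (hd : d = 2 * k + 1) (hreg : G.IsRegularOfDegree d) :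
    ∃ F : Set (Sym2 V), F ⊆ G.edgeSet ∧
      (∀ v : V, {e ∈ F | v ∈ e}.ncard = 3 ∨ {e ∈ F | v ∈ e}.ncard = 4) ∧
      ({v : V | {e ∈ F | v ∈ e}.ncard = 3}.ncard : ℚ) ≤
        8 * (Fintype.card V : ℚ) / ((d : ℚ) + 1) := by
  subst hd
  obtain ⟨c, hc⟩ := G.exists_edgeColoring_card_incident_le_two (k + 1) fun v => by
    rw [hreg v]; omega
  obtain ⟨F, hFG, hdeg, hthree⟩ :=
    hreg.exists_subgraph_degree_three_four (by omega) (Fintype.card_fin _) c hc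
  have hncard : ∀ v, {e ∈ (F : Set (Sym2 V)) | v ∈ e}.ncard = #{e ∈ F | v ∈ e} := fun v => by
    rw [← Set.ncard_coe_finset]
    congr 1
    ext
    simp
  refine ⟨F, fun e he => G.mem_edgeFinset.mp (hFG he), fun v => hncard v ▸ hdeg v, ?_⟩
  simp only [hncard]
  rw [← coe_filter_univ, Set.ncard_coe_finset, le_div_iff₀ (by positivity)]
  have := (Nat.cast_le (α := ℚ)).mpr hthree
  push_cast at this ⊢
  linarith

end

end TF
end

section
/- Let G be a 3-regular finite simple undirected graph and let Δ₁, …, Δ_k be an inclusion-wise maximal collection of pairwise node-disjoint triangles in G. Let G' be the (multi)graph obtained from G by contracting each Δ_i to a single node. If x' is a perfect basic 2-matching of G' whose support contains no pair of parallel edges, then G has a perfect triangle-free 2-matching; moreover x' can be expanded to such a 2-matching x of G by, at each contracted node, either completing an incident double edge of x' with a double edge on the remaining two nodes of the triangle, or lengthening an odd circuit of x' through the contracted node by two edges of the triangle. -/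
open scoped Classical

namespace TF

noncomputable section

variable {V : Type*} {W : Type*}

/-!
A perfect 2-matching saturates every node, so the weight `outerDeg p` that `x'` puts on the
edges of `G` leaving the fibre of `p` at `p` sums to 2 over each fibre. Keep `x'` on the edges
between fibres and give an edge `uv` inside a contracted triangle the value
`2 - (outerDeg u + outerDeg v)`: if one node of the triangle carries 2 this is the double edge on
the other two, if two nodes carry 1 it routes the odd circuit along two edges of the triangle.
Every node then has degree exactly 2. A triangle in the support cannot lie in one fibre (its three
values cannot all be positive when the outer weights sum to 2), cannot have exactly two nodes in
one fibre (its two edges to the third node would be parallel edges of the support of `x'`), and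
cannot meet three fibres: by maximality it meets some `Δ i`, and in a cubic graph a node of `Δ i`
has only one neighbour outside `Δ i`.
-/

open Finset

lemma apply_mk_self_eq_zero {G : SimpleGraph V} {x : Sym2 V → ℕ}
    (hsupp : ∀ e, x e ≠ 0 → e ∈ G.edgeSet) (v : V) : x s(v, v) = 0 := by
  by_contra h
  exact G.loopless.irrefl v (hsupp _ h)

section TwoMatching

variable [Fintype V]

lemma sum_filter_mem_eq_sum_mk {M : Type*} [AddCommMonoid M] (x : Sym2 V → M) (v : V) :
    ∑ e ∈ univ.filter (fun e : Sym2 V => v ∈ e), x e = ∑ w, x s(v, w) := by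
  have hinc : univ.filter (fun e : Sym2 V => v ∈ e) = univ.map (Sym2.mkEmbedding v) := by
    ext e
    simp [Sym2.mem_iff_exists, eq_comm]
  rw [hinc, sum_map]
  rfl

lemma sum_sum_mk_eq_two_mul {M : Type*} [AddCommMonoid M] (x : Sym2 V → M)
    (hx : ∀ v, x s(v, v) = 0) : ∑ v, ∑ w, x s(v, w) = 2 • ∑ e, x e := by
  rw [← Fintype.sum_prod_type', ← sum_fiberwise univ (fun p : V × V => s(p.1, p.2)), smul_sum]
  refine sum_congr rfl fun e _ => ?_
  induction e using Sym2.ind with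
  | _ a b =>
    by_cases hab : a = b
    · subst hab
      rw [hx, smul_zero]
      exact sum_eq_zero fun p hp => by rw [(mem_filter.mp hp).2, hx]
    · have hpairs : univ.filter (fun p : V × V => s(p.1, p.2) = s(a, b)) = {(a, b), (b, a)} := by
        ext ⟨p, q⟩
        simp [or_comm]
      rw [sum_congr rfl fun p hp => congrArg x (mem_filter.mp hp).2, sum_const, hpairs,
        card_pair (by simp [hab])]

lemma IsTwoMatching.sum_mk_eq_two {G : SimpleGraph V} {x : Sym2 V → ℕ}
    (hx : IsTwoMatching G x) (hsize : size x = Fintype.card V) (v : V) :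
    ∑ w, x s(v, w) = 2 := by
  have hle : ∀ u, ∑ w, x s(u, w) ≤ 2 := fun u => by
    rw [← sum_filter_mem_eq_sum_mk]
    exact hx.2.2 u
  have htotal : ∑ u, ∑ w, x s(u, w) = ∑ _u : V, 2 := by
    rw [sum_sum_mk_eq_two_mul x (apply_mk_self_eq_zero hx.1), sum_const, card_univ, ← size,
      hsize, smul_eq_mul, smul_eq_mul, mul_comm]
  exact le_antisymm (hle v) ((sum_eq_sum_iff_of_le fun u _ => hle u).mp htotal v (mem_univ v)).ge

lemma isTwoMatching_and_size_of_sum_mk_eq_two {G : SimpleGraph V} {x : Sym2 V → ℕ}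
    (hsupp : ∀ e, x e ≠ 0 → e ∈ G.edgeSet) (hdeg : ∀ v, ∑ w, x s(v, w) = 2) :
    IsTwoMatching G x ∧ size x = Fintype.card V := by
  refine ⟨⟨hsupp, fun e => ?_, fun v => by rw [sum_filter_mem_eq_sum_mk, hdeg]⟩, ?_⟩
  · induction e using Sym2.ind with
    | _ a b => exact hdeg a ▸ single_le_sum (fun w _ => Nat.zero_le (x s(a, w))) (mem_univ b)
  · have h := sum_sum_mk_eq_two_mul x (apply_mk_self_eq_zero hsupp)
    rw [sum_congr rfl fun v _ => hdeg v, sum_const, card_univ, smul_eq_mul, smul_eq_mul] at h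
    rw [size]
    omega

end TwoMatching

-- The paper's condition that the support of `x'` has no parallel edges in the multigraph
-- obtained from `G` by contracting the fibres of `f`.
def LiftsUniquely (G : SimpleGraph V) (f : V → W) (x' : Sym2 W → ℕ) : Prop :=
  ∀ a b, x' s(a, b) ≠ 0 → a ≠ b ∧ ∃! p : V × V, G.Adj p.1 p.2 ∧ f p.1 = a ∧ f p.2 = b

lemma LiftsUniquely.of_contraction {G : SimpleGraph V} {G' : SimpleGraph W} {f : V → W}
    {x' : Sym2 W → ℕ}
    (hG' : ∀ a b : W, G'.Adj a b ↔ (a ≠ b ∧ ∃ u v : V, G.Adj u v ∧ f u = a ∧ f v = b))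
    (hsupp : ∀ e, x' e ≠ 0 → e ∈ G'.edgeSet)
    (hnopar : ∀ a b : W, x' s(a, b) ≠ 0 →
      ∀ u₁ v₁ u₂ v₂ : V, G.Adj u₁ v₁ → G.Adj u₂ v₂ →
        f u₁ = a → f v₁ = b → f u₂ = a → f v₂ = b → s(u₁, v₁) = s(u₂, v₂)) :
    LiftsUniquely G f x' := by
  intro a b hab
  obtain ⟨hne, u, v, huv, rfl, rfl⟩ := (hG' a b).mp (hsupp _ hab)
  refine ⟨hne, (u, v), ⟨huv, rfl, rfl⟩, ?_⟩
  rintro ⟨p, q⟩ ⟨hpq, hp, hq⟩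
  rcases Sym2.eq_iff.mp (hnopar _ _ hab p q u v hpq huv hp hq rfl rfl) with ⟨rfl, rfl⟩ | ⟨rfl, rfl⟩
  · rfl
  · exact absurd hp.symm hne

section Expansion

variable [Fintype V] (G : SimpleGraph V) (f : V → W) (x' : Sym2 W → ℕ)

def fiber (w : W) : Finset V := univ.filter (fun v => f v = w)

def outerDeg (p : V) : ℕ :=
  ∑ q ∈ univ.filter (fun q => G.Adj p q ∧ f p ≠ f q), x' s(f p, f q)

def expand : Sym2 V → ℕ :=
  Sym2.lift ⟨fun u v => if G.Adj u v then
      if f u = f v then 2 - (outerDeg G f x' u + outerDeg G f x' v) else x' s(f u, f v)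
    else 0, fun u v => by
      by_cases h : G.Adj u v <;> by_cases h' : f u = f v <;>
        simp [h, h', G.adj_comm v u, eq_comm (a := f v), add_comm, Sym2.eq_swap]⟩

variable {G f x'}

@[simp]
lemma expand_mk (u v : V) : expand G f x' s(u, v) = if G.Adj u v then
      if f u = f v then 2 - (outerDeg G f x' u + outerDeg G f x' v) else x' s(f u, f v)
    else 0 := rfl

lemma adj_of_expand_ne_zero {u v : V} (h : expand G f x' s(u, v) ≠ 0) : G.Adj u v := by
  by_contra hadj
  simp [hadj] at h

lemma sum_outerDeg_fiber [Fintype W] (hx' : LiftsUniquely G f x') (w : W) :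
    ∑ p ∈ fiber f w, outerDeg G f x' p = ∑ u, x' s(w, u) := by
  set S := univ.filter (fun pq : V × V => G.Adj pq.1 pq.2 ∧ f pq.1 = w ∧ f pq.2 ≠ w)
  have hS : ∑ p ∈ fiber f w, outerDeg G f x' p = ∑ pq ∈ S, x' s(w, f pq.2) := by
    rw [sum_finset_product S (fiber f w) fun p => univ.filter fun q => G.Adj p q ∧ f p ≠ f q]
    · refine sum_congr rfl fun p hp => ?_
      obtain rfl : f p = w := (mem_filter.mp hp).2
      rfl
    · rintro ⟨p, q⟩
      simp only [S, fiber, mem_filter, mem_univ, true_and]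
      constructor
      · rintro ⟨hpq, rfl, hq⟩
        exact ⟨rfl, hpq, Ne.symm hq⟩
      · rintro ⟨rfl, hpq, hq⟩
        exact ⟨hpq, rfl, Ne.symm hq⟩
  rw [hS, ← sum_fiberwise S (fun pq => f pq.2)]
  refine sum_congr rfl fun u _ => ?_
  rw [sum_congr rfl fun pq hpq => by rw [(mem_filter.mp hpq).2], sum_const]
  by_cases hu : x' s(w, u) = 0
  · rw [hu, smul_zero]
  obtain ⟨hwu, p, hp, huniq⟩ := hx' w u hu
  have hlift : S.filter (fun pq => f pq.2 = u) = {p} := by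
    ext q
    simp only [S, mem_filter, mem_univ, true_and, mem_singleton]
    constructor
    · rintro ⟨⟨hq, hq1, -⟩, hq2⟩
      exact huniq q ⟨hq, hq1, hq2⟩
    · rintro rfl
      exact ⟨⟨hp.1, hp.2.1, hp.2.2 ▸ Ne.symm hwu⟩, hp.2.2⟩
  rw [hlift, card_singleton, one_smul]

lemma sum_expand_mk (v : V) : ∑ q, expand G f x' s(v, q) = outerDeg G f x' v +
    ∑ q ∈ univ.filter (fun q => G.Adj v q ∧ f v = f q),
      (2 - (outerDeg G f x' v + outerDeg G f x' q)) := by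
  calc ∑ q, expand G f x' s(v, q)
      = ∑ q, ((if G.Adj v q ∧ f v ≠ f q then x' s(f v, f q) else 0) +
          if G.Adj v q ∧ f v = f q then 2 - (outerDeg G f x' v + outerDeg G f x' q) else 0) :=
        sum_congr rfl fun q _ => by
          by_cases hadj : G.Adj v q <;> by_cases hf : f v = f q <;> simp [hadj, hf]
    _ = _ := by rw [sum_add_distrib, ← sum_filter, ← sum_filter, outerDeg]

lemma sum_expand_mk_eq_two
    (hfib : ∀ w, G.IsNClique 1 (fiber f w) ∨ G.IsNClique 3 (fiber f w))
    (hout : ∀ w, ∑ p ∈ fiber f w, outerDeg G f x' p = 2) (v : V) :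
    ∑ q, expand G f x' s(v, q) = 2 := by
  have hv : v ∈ fiber f (f v) := by simp [fiber]
  have hnbr : univ.filter (fun q => G.Adj v q ∧ f v = f q) = (fiber f (f v)).erase v := by
    ext q
    simp only [fiber, mem_filter, mem_univ, true_and, mem_erase]
    constructor
    · rintro ⟨hadj, hq⟩
      exact ⟨hadj.ne.symm, hq.symm⟩
    · rintro ⟨hqv, hq⟩
      have hclique := (hfib (f v)).elim (·.isClique) (·.isClique)
      exact ⟨hclique (by simp [fiber]) (by simp [fiber, hq]) (Ne.symm hqv), hq.symm⟩
  have hsum := hout (f v)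
  rw [← add_sum_erase _ _ hv] at hsum
  rw [sum_expand_mk, hnbr]
  rcases hfib (f v) with h1 | h3
  · have he : (fiber f (f v)).erase v = ∅ :=
      card_eq_zero.mp (by rw [card_erase_of_mem hv, h1.card_eq])
    rw [he, sum_empty] at hsum ⊢
    exact hsum
  · obtain ⟨p, q, hpq, he⟩ := card_eq_two.mp (by rw [card_erase_of_mem hv, h3.card_eq])
    rw [he, sum_pair hpq] at hsum ⊢
    omega

lemma expand_eq_zero_of_triangle (hx' : LiftsUniquely G f x')
    (hfib : ∀ w, G.IsNClique 1 (fiber f w) ∨ G.IsNClique 3 (fiber f w))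
    (hout : ∀ w, ∑ p ∈ fiber f w, outerDeg G f x' p = 2)
    {a b c : V} (hab : G.Adj a b) (hbc : G.Adj b c) (hac : G.Adj a c) (hf : f a = f b) :
    expand G f x' s(a, b) = 0 ∨ expand G f x' s(a, c) = 0 ∨ expand G f x' s(b, c) = 0 := by
  by_cases hfc : f a = f c
  · have habc : G.IsNClique 3 {a, b, c} := SimpleGraph.is3Clique_triple_iff.mpr ⟨hab, hac, hbc⟩
    have hsub : {a, b, c} ⊆ fiber f (f a) := by
      intro v hv
      simp only [mem_insert, mem_singleton] at hv
      simp only [fiber, mem_filter, mem_univ, true_and]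
      rcases hv with rfl | rfl | rfl
      exacts [rfl, hf.symm, hfc.symm]
    have hcard : (fiber f (f a)).card = 3 := by
      rcases hfib (f a) with h1 | h3
      · have hle := card_le_card hsub
        rw [habc.card_eq, h1.card_eq] at hle
        omega
      · exact h3.card_eq
    have hsum := hout (f a)
    rw [← eq_of_subset_of_card_le hsub (by rw [hcard, habc.card_eq]),
      sum_insert (by simp [hab.ne, hac.ne]), sum_pair hbc.ne] at hsum
    simp only [expand_mk, hab, hac, hbc, if_true, ← hf, ← hfc]
    omega
  · refine Or.inr (Or.inl ?_)
    by_contra h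
    have hx'ac : x' s(f a, f c) ≠ 0 := by simpa [hac, hfc] using h
    obtain ⟨-, p, -, huniq⟩ := hx' _ _ hx'ac
    have hac_bc := (huniq (a, c) ⟨hac, rfl, rfl⟩).trans (huniq (b, c) ⟨hbc, hf.symm, rfl⟩).symm
    exact hab.ne (Prod.ext_iff.mp hac_bc).1

lemma isTriangleFree_expand (hx' : LiftsUniquely G f x')
    (hfib : ∀ w, G.IsNClique 1 (fiber f w) ∨ G.IsNClique 3 (fiber f w))
    (hout : ∀ w, ∑ p ∈ fiber f w, outerDeg G f x' p = 2)
    (htri : ∀ a b c, G.Adj a b → G.Adj b c → G.Adj a c → f a = f b ∨ f a = f c ∨ f b = f c) :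
    IsTriangleFree (expand G f x') := by
  rintro ⟨a, b, c, -, -, -, hab, hac, hbc⟩
  simp only [Set.mem_ofPred_eq] at hab hac hbc
  have hba := Sym2.eq_swap (a := a) ▸ hab
  have hca := Sym2.eq_swap (a := a) ▸ hac
  have hcb := Sym2.eq_swap (a := b) ▸ hbc
  have Aab := adj_of_expand_ne_zero hab
  have Aac := adj_of_expand_ne_zero hac
  have Abc := adj_of_expand_ne_zero hbc
  rcases htri a b c Aab Abc Aac with h | h | h
  · rcases expand_eq_zero_of_triangle hx' hfib hout Aab Abc Aac h with h | h | h
    exacts [hab h, hac h, hbc h]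
  · rcases expand_eq_zero_of_triangle hx' hfib hout Aac Abc.symm Aab h with h | h | h
    exacts [hac h, hab h, hcb h]
  · rcases expand_eq_zero_of_triangle hx' hfib hout Abc Aac.symm Aab.symm h with h | h | h
    exacts [hbc h, hba h, hca h]

end Expansion

section CubicGraph

variable [Fintype V] {G : SimpleGraph V}

lemma eq_of_adj_of_notMem_of_isNClique_three (hreg : G.IsRegularOfDegree 3) {t : Finset V}
    (ht : G.IsNClique 3 t) {v r s : V} (hv : v ∈ t) (hr : G.Adj v r) (hs : G.Adj v s)
    (hrt : r ∉ t) (hst : s ∉ t) : r = s := by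
  by_contra hrs
  have hsub : insert r (insert s (t.erase v)) ⊆ G.neighborFinset v := by
    intro u hu
    simp only [mem_insert, mem_erase] at hu
    rw [SimpleGraph.mem_neighborFinset]
    rcases hu with rfl | rfl | ⟨huv, hu⟩
    exacts [hr, hs, ht.isClique hv hu (Ne.symm huv)]
  have hcard := card_le_card hsub
  rw [card_insert_of_notMem (by simp [hrs, hrt]),
    card_insert_of_notMem fun h => hst (mem_of_mem_erase h), card_erase_of_mem hv, ht.card_eq,
    SimpleGraph.card_neighborFinset_eq_degree, hreg v] at hcard
  omega

lemma eq_or_eq_or_eq_of_triangle (hreg : G.IsRegularOfDegree 3) {k : ℕ} {Δ : Fin k → Finset V}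
    (hΔ : ∀ i, G.IsNClique 3 (Δ i))
    (hmax : ∀ a b c : V, G.Adj a b → G.Adj b c → G.Adj a c →
      ∃ i, ¬ Disjoint ({a, b, c} : Finset V) (Δ i))
    {f : V → W} (hfibΔ : ∀ i, ∃ w, ∀ v, f v = w ↔ v ∈ Δ i)
    {a b c : V} (hab : G.Adj a b) (hbc : G.Adj b c) (hac : G.Adj a c) :
    f a = f b ∨ f a = f c ∨ f b = f c := by
  by_contra! hne
  obtain ⟨hfab, hfac, hfbc⟩ := hne
  obtain ⟨i, hi⟩ := hmax a b c hab hbc hac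
  obtain ⟨v, hv, hvi⟩ := not_disjoint_iff.mp hi
  obtain ⟨w, hw⟩ := hfibΔ i
  have hout : ∀ u, f u ≠ f v → u ∉ Δ i := fun u hu hui =>
    hu (((hw u).mpr hui).trans ((hw v).mpr hvi).symm)
  simp only [mem_insert, mem_singleton] at hv
  rcases hv with rfl | rfl | rfl
  · exact hbc.ne (eq_of_adj_of_notMem_of_isNClique_three hreg (hΔ i) hvi hab hac
      (hout b (Ne.symm hfab)) (hout c (Ne.symm hfac)))
  · exact hac.ne (eq_of_adj_of_notMem_of_isNClique_three hreg (hΔ i) hvi hab.symm hbc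
      (hout a hfab) (hout c (Ne.symm hfbc)))
  · exact hab.ne (eq_of_adj_of_notMem_of_isNClique_three hreg (hΔ i) hvi hac.symm hbc.symm
      (hout a hfac) (hout b hfbc))

lemma isNClique_fiber {k : ℕ} {Δ : Fin k → Finset V} (hΔ : ∀ i, G.IsNClique 3 (Δ i))
    {f : V → W} (hfib : ∀ w : W, (∃ i, ∀ v, f v = w ↔ v ∈ Δ i) ∨ (∃! v, f v = w)) (w : W) :
    G.IsNClique 1 (fiber f w) ∨ G.IsNClique 3 (fiber f w) := by
  rcases hfib w with ⟨i, hi⟩ | ⟨v, hv, huniq⟩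
  · have hfi : fiber f w = Δ i := by
      ext u
      simp [fiber, hi]
    exact Or.inr (hfi ▸ hΔ i)
  · refine Or.inl (SimpleGraph.isNClique_one.mpr ⟨v, ?_⟩)
    ext u
    simp only [fiber, mem_filter, mem_univ, true_and, mem_singleton]
    exact ⟨huniq u, fun h => h ▸ hv⟩

end CubicGraph

theorem stmt18_general [Fintype V] [Fintype W] (G : SimpleGraph V) (G' : SimpleGraph W)
    (hreg : G.IsRegularOfDegree 3)
    (k : ℕ) (Δ : Fin k → Finset V)
    (htri : ∀ i, (Δ i).card = 3 ∧ ∀ u ∈ Δ i, ∀ v ∈ Δ i, u ≠ v → G.Adj u v)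
    (hmax : ∀ a b c : V, G.Adj a b → G.Adj b c → G.Adj a c →
      ∃ i, ¬ Disjoint ({a, b, c} : Finset V) (Δ i))
    (f : V → W)
    (hfibΔ : ∀ i, ∃ w, ∀ v, f v = w ↔ v ∈ Δ i)
    (hfib : ∀ w : W, (∃ i, ∀ v, f v = w ↔ v ∈ Δ i) ∨ (∃! v, f v = w))
    (hG' : ∀ a b : W, G'.Adj a b ↔ (a ≠ b ∧ ∃ u v : V, G.Adj u v ∧ f u = a ∧ f v = b))
    (x' : Sym2 W → ℕ)
    (hx' : IsTwoMatching G' x') (hperf : size x' = Fintype.card W)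
    (hnopar : ∀ a b : W, x' s(a, b) ≠ 0 →
      ∀ u₁ v₁ u₂ v₂ : V, G.Adj u₁ v₁ → G.Adj u₂ v₂ →
        f u₁ = a → f v₁ = b → f u₂ = a → f v₂ = b → s(u₁, v₁) = s(u₂, v₂)) :
    ∃ x : Sym2 V → ℕ, IsTwoMatching G x ∧ IsTriangleFree x ∧
      size x = Fintype.card V ∧
      ∀ u v : V, G.Adj u v → f u ≠ f v → x s(u, v) ≠ 0 →
        x s(u, v) = x' s(f u, f v) := by
  have hΔ : ∀ i, G.IsNClique 3 (Δ i) := fun i =>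
    ⟨fun u hu v hv huv => (htri i).2 u hu v hv huv, (htri i).1⟩
  have hlifts : LiftsUniquely G f x' := .of_contraction hG' hx'.1 hnopar
  have hfibers := isNClique_fiber hΔ hfib
  have hout : ∀ w, ∑ p ∈ fiber f w, outerDeg G f x' p = 2 := fun w =>
    (sum_outerDeg_fiber hlifts w).trans (hx'.sum_mk_eq_two hperf w)
  obtain ⟨hmatch, hsize⟩ := isTwoMatching_and_size_of_sum_mk_eq_two
    (fun e he => e.ind (fun _ _ he => adj_of_expand_ne_zero he) he)
    (sum_expand_mk_eq_two hfibers hout)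
  refine ⟨expand G f x', hmatch, isTriangleFree_expand hlifts hfibers hout ?_, hsize, ?_⟩
  · exact fun a b c => eq_or_eq_or_eq_of_triangle hreg hΔ hmax hfibΔ
  · intro u v huv hne _
    simp [huv, hne]

theorem stmt18 [Fintype V] [Fintype W] (G : SimpleGraph V) (G' : SimpleGraph W)
    (hreg : G.IsRegularOfDegree 3)
    (k : ℕ) (Δ : Fin k → Finset V)
    (htri : ∀ i, (Δ i).card = 3 ∧ ∀ u ∈ Δ i, ∀ v ∈ Δ i, u ≠ v → G.Adj u v)
    (hdisj : ∀ i j, i ≠ j → Disjoint (Δ i) (Δ j))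
    (hmax : ∀ a b c : V, G.Adj a b → G.Adj b c → G.Adj a c →
      ∃ i, ¬ Disjoint ({a, b, c} : Finset V) (Δ i))
    (f : V → W) (hsurj : Function.Surjective f)
    (hfibΔ : ∀ i, ∃ w, ∀ v, f v = w ↔ v ∈ Δ i)
    (hfib : ∀ w : W, (∃ i, ∀ v, f v = w ↔ v ∈ Δ i) ∨ (∃! v, f v = w))
    (hG' : ∀ a b : W, G'.Adj a b ↔ (a ≠ b ∧ ∃ u v : V, G.Adj u v ∧ f u = a ∧ f v = b))
    (x' : Sym2 W → ℕ)
    (hx' : IsTwoMatching G' x') (hperf : size x' = Fintype.card W)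
    (hbasic : IsBasic G' x')
    (hnopar : ∀ a b : W, x' s(a, b) ≠ 0 →
      ∀ u₁ v₁ u₂ v₂ : V, G.Adj u₁ v₁ → G.Adj u₂ v₂ →
        f u₁ = a → f v₁ = b → f u₂ = a → f v₂ = b → s(u₁, v₁) = s(u₂, v₂)) :
    ∃ x : Sym2 V → ℕ, IsTwoMatching G x ∧ IsTriangleFree x ∧
      size x = Fintype.card V ∧
      ∀ u v : V, G.Adj u v → f u ≠ f v → x s(u, v) ≠ 0 →
        x s(u, v) = x' s(f u, f v) :=
  stmt18_general G G' hreg k Δ htri hmax f hfibΔ hfib hG' x' hx' hperf hnopar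

end

end TF
end
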